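/- arXiv:2408.16653 — 11 statements merged into one kernel-verified Lean document; each statement's English description precedes it below -/
import Mathlib

section
/- Let m be a positive integer, 0 < γ < 1/2, D a probability distribution on Fin m, and c, h : Fin m → {−1,1}. Suppose loss_D(h) = 1/2 − γ_ℓ for some real γ_ℓ with γ_ℓ ≥ γ/2. Set α = (1/2)·ln((1/2 + γ/2)/(1/2 − γ/2)) and Z = ∑ i, D i · exp(−α · c i · h i). Then Z ≤ √(1 − γ²) ≤ exp(−γ²/2). -/
open Finset

open scoped Classical

/-- bound on the normalization factor `Z` of a boosting step. -/
theorem stmt_0 (m : ℕ) (hm : 0 < m) (γ γℓ : ℝ) (hγ0 : 0 < γ) (hγ1 : γ < 1/2)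
    (D : Fin m → ℝ) (hD0 : ∀ i, 0 ≤ D i) (hD1 : ∑ i, D i = 1)
    (c h : Fin m → ℝ) (hc : ∀ i, c i = 1 ∨ c i = -1) (hh : ∀ i, h i = 1 ∨ h i = -1)
    (hloss : ∑ i, D i * (if h i ≠ c i then (1 : ℝ) else 0) = 1/2 - γℓ)
    (hγℓ : γ/2 ≤ γℓ) :
    (∑ i, D i * Real.exp (-((1/2) * Real.log ((1/2 + γ/2)/(1/2 - γ/2))) * c i * h i))
        ≤ Real.sqrt (1 - γ^2)
      ∧ Real.sqrt (1 - γ^2) ≤ Real.exp (-γ^2/2) := by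
  set α : ℝ := (1/2) * Real.log ((1/2 + γ/2)/(1/2 - γ/2)) with hα
  have hγ1' : 0 < 1 - γ := by linarith
  have hγ1'' : 0 < 1 + γ := by linarith
  have hr : (1/2 + γ/2)/(1/2 - γ/2) = (1 + γ)/(1 - γ) := by
    rw [div_eq_div_iff (by linarith) (by linarith)]; ring
  have hrpos : (0:ℝ) < (1 + γ)/(1 - γ) := div_pos hγ1'' hγ1'
  set a : ℝ := Real.sqrt (1 + γ) with ha
  set b : ℝ := Real.sqrt (1 - γ) with hb
  have hapos : 0 < a := Real.sqrt_pos.mpr hγ1''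
  have hbpos : 0 < b := Real.sqrt_pos.mpr hγ1'
  have ha2 : a^2 = 1 + γ := Real.sq_sqrt hγ1''.le
  have hb2 : b^2 = 1 - γ := Real.sq_sqrt hγ1'.le
  have hexpα : Real.exp α = a / b := by
    rw [hα, hr, mul_comm, ← Real.rpow_def_of_pos hrpos, ← Real.sqrt_eq_rpow,
      Real.sqrt_div hγ1''.le]
  have hexpnα : Real.exp (-α) = b / a := by
    rw [Real.exp_neg, hexpα, inv_div]
  -- pointwise rewrite
  have pt : ∀ i, Real.exp (-α * c i * h i)
      = Real.exp (-α) + (Real.exp α - Real.exp (-α)) * (if h i ≠ c i then (1:ℝ) else 0) := by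
    intro i
    rcases hc i with h1 | h1 <;> rcases hh i with h2 | h2 <;>
      simp [h1, h2] <;> norm_num <;> ring_nf
  have hsum : (∑ i, D i * Real.exp (-α * c i * h i))
      = Real.exp (-α) + (Real.exp α - Real.exp (-α)) * (1/2 - γℓ) := by
    simp_rw [pt, mul_add]
    rw [Finset.sum_add_distrib, ← Finset.sum_mul, hD1, one_mul, ← hloss, Finset.mul_sum]
    congr 1
    apply Finset.sum_congr rfl
    intro i _
    ring
  rw [hsum]
  constructor
  · have hab : Real.sqrt (1 - γ^2) = a * b := by
      rw [ha, hb, ← Real.sqrt_mul hγ1''.le]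
      congr 1; ring
    rw [hab, hexpα, hexpnα]
    have h1 : b/a + (a/b - b/a)*(1/2-γℓ) = (b^2 + (a^2 - b^2)*(1/2-γℓ))/(a*b) := by
      field_simp
    rw [h1, div_le_iff₀ (by positivity)]
    nlinarith [mul_le_mul_of_nonneg_left hγℓ hγ0.le]
  · have h1 : Real.sqrt (1 - γ^2) ≤ Real.sqrt (Real.exp (-γ^2)) := by
      apply Real.sqrt_le_sqrt
      nlinarith [Real.add_one_le_exp (-γ^2)]
    calc Real.sqrt (1 - γ^2) ≤ Real.sqrt (Real.exp (-γ^2)) := h1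
      _ = Real.exp (-γ^2/2) := by
          rw [← Real.exp_half]
end

section
/- Let Ω be a nonempty finite set, P and Q probability distributions on Ω with the same support, A ⊆ Ω an event, and λ > 0 a real number. Writing Pr_P[A] = ∑_{ω ∈ A} P ω and Pr_Q[A] = ∑_{ω ∈ A} Q ω, it holds that Pr_Q[A] ≥ (exp(λ · Pr_P[A] − KL(P‖Q)) − 1)/(exp(λ) − 1). -/
/-
With `f = λ · 1_A`, the Donsker–Varadhan (Gibbs) variational inequality
`E_P[f] - KL(P‖Q) ≤ log E_Q[exp f]` gives
`λ · Pr_P[A] - KL(P‖Q) ≤ log (1 + (exp λ - 1) · Pr_Q[A])`; exponentiating and solving for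
`Pr_Q[A]` is the claim. The variational inequality itself is Jensen's inequality for the concave
`log`, applied to the likelihood ratio `Q exp f / P` under `P`.
-/

open Finset

open scoped Classical

open Real

theorem sum_mul_log_div_le_log_sum {ι : Type*} (s : Finset ι) (w g : ι → ℝ)
    (hw : ∀ i ∈ s, 0 < w i) (hw1 : ∑ i ∈ s, w i = 1) (hg : ∀ i ∈ s, 0 < g i) :
    ∑ i ∈ s, w i * log (g i / w i) ≤ log (∑ i ∈ s, g i) := by
  have jensen := strictConcaveOn_log_Ioi.concaveOn.le_map_sum (fun i hi => (hw i hi).le) hw1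
    (p := fun i => g i / w i) fun i hi => div_pos (hg i hi) (hw i hi)
  have hcancel : ∀ i ∈ s, w i * (g i / w i) = g i := fun i hi => mul_div_cancel₀ _ (hw i hi).ne'
  simpa only [smul_eq_mul, sum_congr rfl hcancel] using jensen

theorem exp_sum_mul_sub_sum_mul_log_div_le_sum_mul_exp {ι : Type*} (s : Finset ι)
    (P Q f : ι → ℝ) (hP : ∀ i ∈ s, 0 < P i) (hP1 : ∑ i ∈ s, P i = 1) (hQ : ∀ i ∈ s, 0 < Q i) :
    exp (∑ i ∈ s, P i * f i - ∑ i ∈ s, P i * log (P i / Q i)) ≤ ∑ i ∈ s, Q i * exp (f i) := by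
  have hterm : ∀ i ∈ s,
      P i * f i - P i * log (P i / Q i) = P i * log (Q i * exp (f i) / P i) := by
    intro i hi
    have hPi := (hP i hi).ne'
    have hQi := (hQ i hi).ne'
    rw [log_div (mul_ne_zero hQi (exp_pos _).ne') hPi, log_mul hQi (exp_pos _).ne', log_exp,
      log_div hPi hQi]
    ring
  have hs : s.Nonempty := nonempty_of_sum_ne_zero (hP1 ▸ one_ne_zero)
  have hg : ∀ i ∈ s, 0 < Q i * exp (f i) := fun i hi => mul_pos (hQ i hi) (exp_pos _)
  rw [← le_log_iff_exp_le (sum_pos hg hs), ← sum_sub_distrib, sum_congr rfl hterm]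
  exact sum_mul_log_div_le_log_sum s P _ hP hP1 hg

theorem sum_mul_exp_ite_mem {Ω : Type*} [Fintype Ω] (Q : Ω → ℝ) (A : Finset Ω) (lam : ℝ) :
    ∑ ω, Q ω * exp (if ω ∈ A then lam else 0) = ∑ ω, Q ω + (exp lam - 1) * ∑ ω ∈ A, Q ω := by
  have hsplit : ∀ ω, Q ω * exp (if ω ∈ A then lam else 0)
      = Q ω + (exp lam - 1) * if ω ∈ A then Q ω else 0 := by
    intro ω; split_ifs <;> [ring; simp]
  simp only [hsplit, sum_add_distrib, ← mul_sum, sum_ite_mem, univ_inter]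

theorem stmt_4_general (Ω : Type*) [Fintype Ω]
    (P Q : Ω → ℝ)
    (hP0 : ∀ ω, 0 ≤ P ω) (hP1 : ∑ ω, P ω = 1)
    (hQ0 : ∀ ω, 0 ≤ Q ω) (hQ1 : ∑ ω, Q ω = 1)
    (hsupp : ∀ ω, 0 < P ω ↔ 0 < Q ω)
    (A : Finset Ω) (lam : ℝ) (hlam : 0 < lam) :
    ∑ ω ∈ A, Q ω ≥
      (Real.exp (lam * ∑ ω ∈ A, P ω -
          ∑ ω ∈ Finset.univ.filter (fun ω => 0 < P ω), P ω * Real.log (P ω / Q ω)) - 1)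
        / (Real.exp lam - 1) := by
  set s := univ.filter fun ω => 0 < P ω
  set f : Ω → ℝ := fun ω => if ω ∈ A then lam else 0
  have hPs : ∀ ω ∈ s, 0 < P ω := fun ω hω => (mem_filter.mp hω).2
  have hsum_s (h : Ω → ℝ) : ∑ ω ∈ s, P ω * h ω = ∑ ω, P ω * h ω :=
    sum_filter_of_ne fun ω _ hne => (hP0 ω).lt_of_ne fun h0 => hne (by rw [← h0, zero_mul])
  have hP1s : ∑ ω ∈ s, P ω = 1 := by simpa using (hsum_s 1).trans (by simpa using hP1)
  have hmean : ∑ ω ∈ s, P ω * f ω = lam * ∑ ω ∈ A, P ω := by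
    rw [hsum_s]
    simp only [f, mul_ite, mul_zero, sum_ite_mem, univ_inter, ← sum_mul, mul_comm lam]
  have hDV := exp_sum_mul_sub_sum_mul_log_div_le_sum_mul_exp s P Q f hPs hP1s
    fun ω hω => (hsupp ω).1 (hPs ω hω)
  have hmgf : ∑ ω ∈ s, Q ω * exp (f ω) ≤ 1 + (exp lam - 1) * ∑ ω ∈ A, Q ω :=
    calc ∑ ω ∈ s, Q ω * exp (f ω) ≤ ∑ ω, Q ω * exp (f ω) :=
          sum_le_sum_of_subset_of_nonneg (subset_univ s) fun ω _ _ =>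
            mul_nonneg (hQ0 ω) (exp_pos _).le
      _ = 1 + (exp lam - 1) * ∑ ω ∈ A, Q ω := by rw [sum_mul_exp_ite_mem, hQ1]
  have hexp_pos : 0 < exp lam - 1 := by linarith [add_one_lt_exp hlam.ne']
  rw [hmean] at hDV
  rw [ge_iff_le, div_le_iff₀ hexp_pos]
  linarith

/-- lower bound on the probability of an event under `Q` in terms of
its probability under `P` and the KL divergence `KL(P‖Q)`. -/
theorem stmt_4 (Ω : Type*) [Fintype Ω] [Nonempty Ω]
    (P Q : Ω → ℝ)
    (hP0 : ∀ ω, 0 ≤ P ω) (hP1 : ∑ ω, P ω = 1)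
    (hQ0 : ∀ ω, 0 ≤ Q ω) (hQ1 : ∑ ω, Q ω = 1)
    (hsupp : ∀ ω, 0 < P ω ↔ 0 < Q ω)
    (A : Finset Ω) (lam : ℝ) (hlam : 0 < lam) :
    ∑ ω ∈ A, Q ω ≥
      (Real.exp (lam * ∑ ω ∈ A, P ω -
          ∑ ω ∈ Finset.univ.filter (fun ω => 0 < P ω), P ω * Real.log (P ω / Q ω)) - 1)
        / (Real.exp lam - 1) :=
  stmt_4_general Ω P Q hP0 hP1 hQ0 hQ1 hsupp A lam hlam
end

section
/- Let Ω be a nonempty finite set, P and Q probability distributions on Ω with the same support, and A ⊆ Ω an event with Pr_P[A] > 0. Then Pr_Q[A] ≥ exp(−(KL(P‖Q) + ln 2)/Pr_P[A]), where Pr_P[A] = ∑_{ω ∈ A} P ω and Pr_Q[A] = ∑_{ω ∈ A} Q ω. -/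
/-!
Lumping the outcomes into the two cells `A` and `Aᶜ` cannot increase the divergence (log-sum
inequality), so with `p = P(A)`, `q = Q(A)`,
`KL(P‖Q) ≥ p log (p / q) + (1 - p) log (1 - p) ≥ -p log q - H(p) ≥ -p log q - log 2`,
where `H` is the binary entropy. Solving for `q` gives the bound.
-/

open Finset Real

open scoped Classical

theorem Finset.sum_pos_of_sum_pos_of_eq_zero_imp {ι : Type*} {s : Finset ι} {f g : ι → ℝ}
    (hg : ∀ i ∈ s, 0 ≤ g i) (hfg : ∀ i ∈ s, g i = 0 → f i = 0) (hf : 0 < ∑ i ∈ s, f i) :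
    0 < ∑ i ∈ s, g i :=
  (sum_nonneg hg).lt_of_ne fun hG ↦ hf.ne' <| sum_eq_zero fun i hi ↦
    hfg i hi ((sum_eq_zero_iff_of_nonneg hg).1 hG.symm i hi)

/-- The log-sum inequality. -/
theorem Finset.sum_mul_log_sum_div_sum_le {ι : Type*} (s : Finset ι) {f g : ι → ℝ}
    (hf : ∀ i ∈ s, 0 ≤ f i) (hg : ∀ i ∈ s, 0 ≤ g i) (hfg : ∀ i ∈ s, g i = 0 → f i = 0) :
    (∑ i ∈ s, f i) * log ((∑ i ∈ s, f i) / ∑ i ∈ s, g i) ≤ ∑ i ∈ s, f i * log (f i / g i) := by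
  set G := ∑ i ∈ s, g i
  obtain hG | hG := (sum_nonneg hg).eq_or_lt
  · have hf0 : ∀ i ∈ s, f i = 0 := fun i hi ↦
      hfg i hi ((sum_eq_zero_iff_of_nonneg hg).1 hG.symm i hi)
    rw [sum_eq_zero hf0, sum_eq_zero fun i hi ↦ by rw [hf0 i hi, zero_mul], zero_mul]
  -- Jensen for the convex `x ↦ x log x` at the points `f i / g i` with weights `g i / G`.
  have hw : ∀ i ∈ s, g i / G * (f i / g i) = f i / G := by
    intro i hi
    obtain h | h := eq_or_ne (g i) 0
    · simp [h, hfg i hi h]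
    · field_simp
  have jensen := convexOn_mul_log.map_sum_le (t := s) (w := fun i ↦ g i / G)
    (p := fun i ↦ f i / g i) (fun i hi ↦ div_nonneg (hg i hi) hG.le)
    (by rw [← sum_div, div_self hG.ne']) (fun i hi ↦ div_nonneg (hf i hi) (hg i hi))
  have hrhs : ∑ i ∈ s, g i / G * (f i / g i) * log (f i / g i)
      = (∑ i ∈ s, f i * log (f i / g i)) / G := by
    rw [sum_div]
    exact sum_congr rfl fun i hi ↦ by rw [hw i hi, div_mul_eq_mul_div]
  simp only [smul_eq_mul, ← mul_assoc] at jensen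
  rw [sum_congr rfl hw, ← sum_div, hrhs, div_mul_eq_mul_div] at jensen
  exact (div_le_div_iff_of_pos_right hG).1 jensen

theorem Finset.sum_mul_log_sum_le {ι : Type*} (s : Finset ι) {f g : ι → ℝ}
    (hf : ∀ i ∈ s, 0 ≤ f i) (hg : ∀ i ∈ s, 0 ≤ g i) (hfg : ∀ i ∈ s, g i = 0 → f i = 0)
    (hg1 : ∑ i ∈ s, g i ≤ 1) :
    (∑ i ∈ s, f i) * log (∑ i ∈ s, f i) ≤ ∑ i ∈ s, f i * log (f i / g i) := by
  refine le_trans ?_ (s.sum_mul_log_sum_div_sum_le hf hg hfg)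
  obtain hF | hF := (sum_nonneg hf).eq_or_lt
  · rw [← hF, zero_mul, zero_mul]
  have hG := sum_pos_of_sum_pos_of_eq_zero_imp hg hfg hF
  rw [log_div hF.ne' hG.ne']
  nlinarith [log_nonpos hG.le hg1]

theorem neg_mul_log_sum_le_sum_mul_log_div_add_log_two {Ω : Type*} [Fintype Ω] {P Q : Ω → ℝ}
    (hP0 : ∀ ω, 0 ≤ P ω) (hP1 : ∑ ω, P ω = 1) (hQ0 : ∀ ω, 0 ≤ Q ω) (hQ1 : ∑ ω, Q ω ≤ 1)
    (hPQ : ∀ ω, Q ω = 0 → P ω = 0) {A : Finset Ω} (hA : 0 < ∑ ω ∈ A, P ω)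
    (hAQ : 0 < ∑ ω ∈ A, Q ω) :
    -(∑ ω ∈ A, P ω) * log (∑ ω ∈ A, Q ω) ≤ ∑ ω, P ω * log (P ω / Q ω) + log 2 := by
  set p := ∑ ω ∈ A, P ω
  have hPAc : ∑ ω ∈ Aᶜ, P ω = 1 - p := by rw [← hP1, ← sum_add_sum_compl A P]; ring
  have hKLA : p * (log p - log (∑ ω ∈ A, Q ω)) ≤ ∑ ω ∈ A, P ω * log (P ω / Q ω) := by
    rw [← log_div hA.ne' hAQ.ne']
    exact A.sum_mul_log_sum_div_sum_le (fun ω _ ↦ hP0 ω) (fun ω _ ↦ hQ0 ω) fun ω _ ↦ hPQ ω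
  have hKLAc : (1 - p) * log (1 - p) ≤ ∑ ω ∈ Aᶜ, P ω * log (P ω / Q ω) := by
    rw [← hPAc]
    refine Aᶜ.sum_mul_log_sum_le (fun ω _ ↦ hP0 ω) (fun ω _ ↦ hQ0 ω) (fun ω _ ↦ hPQ ω) ?_
    exact (sum_le_univ_sum_of_nonneg hQ0).trans hQ1
  have hentropy : binEntropy p ≤ log 2 := binEntropy_le_log_two
  rw [binEntropy, log_inv, log_inv] at hentropy
  rw [← sum_add_sum_compl A]
  linarith

theorem stmt_5_general (Ω : Type*) [Fintype Ω]
    (P Q : Ω → ℝ)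
    (hP0 : ∀ ω, 0 ≤ P ω) (hP1 : ∑ ω, P ω = 1)
    (hQ0 : ∀ ω, 0 ≤ Q ω) (hQ1 : ∑ ω, Q ω = 1)
    (hsupp : ∀ ω, 0 < P ω ↔ 0 < Q ω)
    (A : Finset Ω) (hA : 0 < ∑ ω ∈ A, P ω) :
    ∑ ω ∈ A, Q ω ≥
      Real.exp (-((∑ ω ∈ Finset.univ.filter (fun ω => 0 < P ω),
          P ω * Real.log (P ω / Q ω)) + Real.log 2) / (∑ ω ∈ A, P ω)) := by
  have hPQ : ∀ ω, Q ω = 0 → P ω = 0 := fun ω hQ ↦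
    (hP0 ω).eq_or_lt.elim Eq.symm fun hP ↦ absurd hQ ((hsupp ω).1 hP).ne'
  have hAQ : 0 < ∑ ω ∈ A, Q ω :=
    sum_pos_of_sum_pos_of_eq_zero_imp (fun ω _ ↦ hQ0 ω) (fun ω _ ↦ hPQ ω) hA
  have hKL : ∑ ω ∈ univ.filter (fun ω => 0 < P ω), P ω * log (P ω / Q ω)
      = ∑ ω, P ω * log (P ω / Q ω) :=
    sum_filter_of_ne fun ω _ h ↦ (hP0 ω).lt_of_ne (Ne.symm (left_ne_zero_of_mul h))
  rw [ge_iff_le, ← le_log_iff_exp_le hAQ, hKL, div_le_iff₀ hA]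
  linarith [neg_mul_log_sum_le_sum_mul_log_div_add_log_two hP0 hP1 hQ0 hQ1.le hPQ hA hAQ]

/-- change-of-measure lower bound on the probability of an event
under `Q` in terms of its probability under `P` and `KL(P‖Q)`. -/
theorem stmt_5 (Ω : Type*) [Fintype Ω] [Nonempty Ω]
    (P Q : Ω → ℝ)
    (hP0 : ∀ ω, 0 ≤ P ω) (hP1 : ∑ ω, P ω = 1)
    (hQ0 : ∀ ω, 0 ≤ Q ω) (hQ1 : ∑ ω, Q ω = 1)
    (hsupp : ∀ ω, 0 < P ω ↔ 0 < Q ω)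
    (A : Finset Ω) (hA : 0 < ∑ ω ∈ A, P ω) :
    ∑ ω ∈ A, Q ω ≥
      Real.exp (-((∑ ω ∈ Finset.univ.filter (fun ω => 0 < P ω),
          P ω * Real.log (P ω / Q ω)) + Real.log 2) / (∑ ω ∈ A, P ω)) :=
  stmt_5_general Ω P Q hP0 hP1 hQ0 hQ1 hsupp A hA
end

section
/- Let m be a positive integer, D_r a probability distribution on Fin m with full support, α ∈ ℝ, and c, h : Fin m → {−1,1}. Let Z = ∑ i, D_r i · exp(−α · c i · h i) and D_{r+1} i = D_r i · exp(−α · c i · h i)/Z. Then for every probability distribution D on Fin m with full support, KL(D‖D_r) − KL(D‖D_{r+1}) = −ln Z − α · ∑ i, D i · c i · h i. -/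
open Finset

/-- the change in KL divergence across a single boosting update. -/
theorem stmt_7 (m : ℕ) (hm : 0 < m)
    (Dr : Fin m → ℝ) (hDr0 : ∀ i, 0 < Dr i) (hDr1 : ∑ i, Dr i = 1)
    (α : ℝ) (c h : Fin m → ℝ)
    (hc : ∀ i, c i = 1 ∨ c i = -1) (hh : ∀ i, h i = 1 ∨ h i = -1)
    (Z : ℝ) (hZ : Z = ∑ i, Dr i * Real.exp (-α * c i * h i))
    (Dr1 : Fin m → ℝ)
    (hDr1' : ∀ i, Dr1 i = Dr i * Real.exp (-α * c i * h i) / Z)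
    (D : Fin m → ℝ) (hD0 : ∀ i, 0 < D i) (hD1 : ∑ i, D i = 1) :
    (∑ i, D i * Real.log (D i / Dr i)) - (∑ i, D i * Real.log (D i / Dr1 i))
      = -Real.log Z - α * ∑ i, D i * c i * h i := by
  have hZpos : 0 < Z := by
    rw [hZ]
    exact Finset.sum_pos (fun i _ => mul_pos (hDr0 i) (Real.exp_pos _))
      (Finset.univ_nonempty_iff.mpr ⟨⟨0, hm⟩⟩)
  have key : ∀ i, D i * Real.log (D i / Dr i) - D i * Real.log (D i / Dr1 i)
      = D i * (-Real.log Z) - D i * (α * (c i * h i)) := by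
    intro i
    have h1 : Dr1 i = Dr i * Real.exp (-α * c i * h i) / Z := hDr1' i
    rw [← mul_sub, Real.log_div (ne_of_gt (hD0 i)) (ne_of_gt (hDr0 i)),
      Real.log_div (ne_of_gt (hD0 i)), h1]
    · rw [Real.log_div (ne_of_gt (mul_pos (hDr0 i) (Real.exp_pos _))) (ne_of_gt hZpos),
        Real.log_mul (ne_of_gt (hDr0 i)) (Real.exp_ne_zero _), Real.log_exp]
      ring
    · rw [h1]
      exact ne_of_gt (div_pos (mul_pos (hDr0 i) (Real.exp_pos _)) hZpos)
  rw [← Finset.sum_sub_distrib]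
  simp_rw [key]
  rw [Finset.sum_sub_distrib, ← Finset.sum_mul, hD1]
  simp_rw [show ∀ i, D i * (α * (c i * h i)) = α * (D i * c i * h i) from fun i => by ring,
    ← Finset.mul_sum]
  ring
end

section
/- Let m be a positive integer, R' ≥ 2 an integer, D_1 a probability distribution on Fin m with full support, c, h_1, …, h_{R'−1} : Fin m → {−1,1}, and α_1, …, α_{R'−1} ∈ ℝ. Define D_2, …, D_{R'} and Z_1, …, Z_{R'−1} by the boosting update. Then KL(D_{R'}‖D_1) = −ln(∏_{r=1}^{R'−1} Z_r) − ∑_{r=1}^{R'−1} α_r · ∑ i, D_{R'} i · c i · h_r i. -/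
open Finset Real

/-!
Unrolling the update gives the closed form
`D_{R'} i = D_1 i · exp (-∑ r, α_r c i h_r i) / ∏ r, Z_r`, so `ln (D_{R'} i / D_1 i)` is the
exponent minus `ln ∏ r, Z_r`. Averaging against `D_{R'}`, which is again a probability
distribution, yields the formula.
-/

section

variable {ι : Type*} {n : ℕ} {D : ℕ → ι → ℝ} {u : Fin n → ι → ℝ} {Z : Fin n → ℝ}

theorem reweight_iterate_eq (hD : ∀ (r : Fin n) i, D (r + 1) i = D r i * exp (u r i) / Z r)
    (i : ι) : D n i = D 0 i * exp (∑ r, u r i) / ∏ r, Z r := by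
  induction n with
  | zero => simp
  | succ n ih =>
    have hlast := hD (Fin.last n) i
    rw [Fin.val_last] at hlast
    rw [hlast, ih (u := fun r => u r.castSucc) (Z := fun r => Z r.castSucc)
      (fun r => hD r.castSucc), Fin.sum_univ_castSucc, Fin.prod_univ_castSucc, exp_add]
    ring

variable [Fintype ι]

def IsFullSupportDistribution (P : ι → ℝ) : Prop :=
  (∀ i, 0 < P i) ∧ ∑ i, P i = 1

namespace IsFullSupportDistribution

variable {P : ι → ℝ}

theorem sum_mul_exp_pos (hP : IsFullSupportDistribution P) (u : ι → ℝ) :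
    0 < ∑ i, P i * exp (u i) :=
  sum_pos (fun i _ => mul_pos (hP.1 i) (exp_pos _))
    (nonempty_of_sum_ne_zero (hP.2 ▸ one_ne_zero))

theorem reweight (hP : IsFullSupportDistribution P) (u : ι → ℝ) :
    IsFullSupportDistribution fun i => P i * exp (u i) / ∑ j, P j * exp (u j) := by
  have hZ := hP.sum_mul_exp_pos u
  refine ⟨fun i => div_pos (mul_pos (hP.1 i) (exp_pos _)) hZ, ?_⟩
  rw [← sum_div, div_self hZ.ne']

end IsFullSupportDistribution

theorem IsFullSupportDistribution.reweight_iterate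
    (hZ : ∀ r : Fin n, Z r = ∑ i, D r i * exp (u r i))
    (hD : ∀ (r : Fin n) i, D (r + 1) i = D r i * exp (u r i) / Z r)
    (h0 : IsFullSupportDistribution (D 0)) : IsFullSupportDistribution (D n) := by
  induction n with
  | zero => exact h0
  | succ n ih =>
    have hn := ih (u := fun r => u r.castSucc) (Z := fun r => Z r.castSucc)
      (fun r => hZ r.castSucc) (fun r => hD r.castSucc)
    convert hn.reweight (u (Fin.last n)) using 1
    funext i
    have hlast := hD (Fin.last n) i
    rw [hZ, Fin.val_last] at hlast
    exact hlast

theorem sum_mul_log_div_reweight_iterate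
    (hZ : ∀ r : Fin n, Z r = ∑ i, D r i * exp (u r i))
    (hD : ∀ (r : Fin n) i, D (r + 1) i = D r i * exp (u r i) / Z r)
    (h0 : IsFullSupportDistribution (D 0)) :
    ∑ i, D n i * log (D n i / D 0 i) = -log (∏ r, Z r) + ∑ r, ∑ i, D n i * u r i := by
  have hn := h0.reweight_iterate hZ hD
  -- `x / 0 = 0` would make `D n` vanish, contradicting `∑ i, D n i = 1`.
  have hZprod : ∏ r, Z r ≠ 0 := by
    intro hzero
    have hsum := hn.2
    simp [reweight_iterate_eq hD, hzero] at hsum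
  have hlog (i : ι) : log (D n i / D 0 i) = ∑ r, u r i - log (∏ r, Z r) := by
    rw [reweight_iterate_eq hD i, mul_div_assoc, mul_div_cancel_left₀ _ (h0.1 i).ne',
      log_div (exp_pos _).ne' hZprod, log_exp]
  calc ∑ i, D n i * log (D n i / D 0 i)
      = -((∑ i, D n i) * log (∏ r, Z r)) + ∑ i, ∑ r, D n i * u r i := by
        simp only [hlog, mul_sub, sum_sub_distrib, sum_mul, mul_sum]
        ring
    _ = -log (∏ r, Z r) + ∑ r, ∑ i, D n i * u r i := by rw [hn.2, one_mul, sum_comm]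

end

-- `D k` is the paper's `D_{k+1}`: `D 0` is the initial distribution and `D (R' - 1)` is `D_{R'}`.
theorem stmt_8_general (m R' : ℕ)
    (D : ℕ → Fin m → ℝ)
    (hD0pos : ∀ i, 0 < D 0 i) (hD0sum : ∑ i, D 0 i = 1)
    (c : Fin m → ℝ)
    (h : Fin (R' - 1) → Fin m → ℝ)
    (α : Fin (R' - 1) → ℝ) (Z : Fin (R' - 1) → ℝ)
    (hZ : ∀ r : Fin (R' - 1), Z r = ∑ i, D r i * Real.exp (-(α r) * c i * h r i))
    (hDs : ∀ r : Fin (R' - 1), ∀ i,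
      D (r + 1) i = D r i * Real.exp (-(α r) * c i * h r i) / Z r) :
    ∑ i, D (R' - 1) i * Real.log (D (R' - 1) i / D 0 i)
      = -Real.log (∏ r, Z r) - ∑ r, α r * ∑ i, D (R' - 1) i * c i * h r i := by
  rw [sum_mul_log_div_reweight_iterate (u := fun r i => -(α r) * c i * h r i) hZ hDs
    ⟨hD0pos, hD0sum⟩, sub_eq_add_neg, ← sum_neg_distrib]
  congr 1
  refine sum_congr rfl fun r _ => ?_
  rw [mul_sum, ← sum_neg_distrib]
  exact sum_congr rfl fun i _ => by ring

/-- telescoping formula for the KL divergence between the distribution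
`D_{R'}` produced by `R'-1` boosting updates and the initial distribution `D_1`.
Here `D k` denotes `D_{k+1}`, i.e. `D 0` is the initial distribution. -/
theorem stmt_8 (m R' : ℕ) (hm : 0 < m) (hR' : 2 ≤ R')
    (D : ℕ → Fin m → ℝ)
    (hD0pos : ∀ i, 0 < D 0 i) (hD0sum : ∑ i, D 0 i = 1)
    (c : Fin m → ℝ) (hc : ∀ i, c i = 1 ∨ c i = -1)
    (h : Fin (R' - 1) → Fin m → ℝ) (hh : ∀ r i, h r i = 1 ∨ h r i = -1)
    (α : Fin (R' - 1) → ℝ) (Z : Fin (R' - 1) → ℝ)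
    (hZ : ∀ r : Fin (R' - 1), Z r = ∑ i, D r i * Real.exp (-(α r) * c i * h r i))
    (hDs : ∀ r : Fin (R' - 1), ∀ i,
      D (r + 1) i = D r i * Real.exp (-(α r) * c i * h r i) / Z r) :
    ∑ i, D (R' - 1) i * Real.log (D (R' - 1) i / D 0 i)
      = -Real.log (∏ r, Z r) - ∑ r, α r * ∑ i, D (R' - 1) i * c i * h r i :=
  stmt_8_general m R' D hD0pos hD0sum c h α Z hZ hDs
end

section
/- Let m and N be positive integers, c, h_1, …, h_N : Fin m → {−1,1}, α ≥ 0, and α_1, …, α_N ∈ [0, α] with ∑_{j=1}^N α_j > 0. Let g i = (∑_{j=1}^N α_j · h_j i)/(∑_{j=1}^N α_j). Then for every real θ ≥ 0, the number of indices i ∈ Fin m with c i · g i < θ is strictly less than exp(N·α·θ) · ∑ i, exp(−c i · ∑_{j=1}^N α_j · h_j i). -/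
open Finset

open scoped Classical

/-- the number of points with margin below `θ` is bounded by the
(rescaled) exponential loss. -/
theorem stmt_9 (m N : ℕ) (hm : 0 < m) (hN : 0 < N)
    (c : Fin m → ℝ) (hc : ∀ i, c i = 1 ∨ c i = -1)
    (h : Fin N → Fin m → ℝ) (hh : ∀ j i, h j i = 1 ∨ h j i = -1)
    (α : ℝ) (hα : 0 ≤ α)
    (a : Fin N → ℝ) (ha : ∀ j, a j ∈ Set.Icc 0 α) (hasum : 0 < ∑ j, a j)
    (θ : ℝ) (hθ : 0 ≤ θ) :
    ((Finset.univ.filter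
        (fun i => c i * ((∑ j, a j * h j i) / (∑ j, a j)) < θ)).card : ℝ)
      < Real.exp (N * α * θ) * ∑ i, Real.exp (-(c i) * ∑ j, a j * h j i) := by
  have hS : (0:ℝ) < ∑ j, a j := hasum
  have hSle : (∑ j, a j) ≤ N * α := by
    calc (∑ j, a j) ≤ ∑ _j : Fin N, α := Finset.sum_le_sum (fun j _ => (ha j).2)
    _ = N * α := by simp [mul_comm]
  set T := Finset.univ.filter
      (fun i => c i * ((∑ j, a j * h j i) / (∑ j, a j)) < θ) with hT
  have key : ∀ i ∈ T,
      (1:ℝ) < Real.exp (N*α*θ) * Real.exp (-(c i) * ∑ j, a j * h j i) := by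
    intro i hi
    rw [hT, Finset.mem_filter] at hi
    have h1 : c i * (∑ j, a j * h j i) < θ * (∑ j, a j) := by
      have h2 := hi.2
      rw [← mul_div_assoc] at h2
      exact (div_lt_iff₀ hS).mp h2
    have h3 : c i * (∑ j, a j * h j i) < θ * (N*α) := by nlinarith
    have h4 : -(N*α*θ) < -(c i) * ∑ j, a j * h j i := by nlinarith
    calc (1:ℝ) = Real.exp (N*α*θ) * Real.exp (-(N*α*θ)) := by
          rw [← Real.exp_add]; simp
    _ < _ := mul_lt_mul_of_pos_left (Real.exp_lt_exp.mpr h4) (Real.exp_pos _)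
  have hle : (∑ i ∈ T, Real.exp (N*α*θ) * Real.exp (-(c i) * ∑ j, a j * h j i))
      ≤ ∑ i : Fin m, Real.exp (N*α*θ) * Real.exp (-(c i) * ∑ j, a j * h j i) := by
    apply Finset.sum_le_sum_of_subset_of_nonneg (Finset.subset_univ _)
    intro i _ _
    positivity
  have hfull : (∑ i : Fin m, Real.exp (N*α*θ) * Real.exp (-(c i) * ∑ j, a j * h j i))
      = Real.exp (N * α * θ) * ∑ i, Real.exp (-(c i) * ∑ j, a j * h j i) := by
    rw [Finset.mul_sum]
  rcases T.eq_empty_or_nonempty with he | hne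
  · rw [he]
    simp only [Finset.card_empty, Nat.cast_zero]
    have : (0:ℝ) < ∑ i : Fin m, Real.exp (-(c i) * ∑ j, a j * h j i) := by
      apply Finset.sum_pos (fun i _ => Real.exp_pos _)
      exact Finset.univ_nonempty_iff.mpr ⟨⟨0, hm⟩⟩
    positivity
  · calc (T.card : ℝ) = ∑ _i ∈ T, (1:ℝ) := by simp
    _ < ∑ i ∈ T, Real.exp (N*α*θ) * Real.exp (-(c i) * ∑ j, a j * h j i) :=
        Finset.sum_lt_sum_of_nonempty hne key
    _ ≤ _ := le_of_le_of_eq hle hfull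
end

section
/- Let 0 < γ < 1/2, let m ≥ 1 and N be positive integers with N ≥ 4·γ^{−2}·ln m, let c, h_1, …, h_N : Fin m → {−1,1}, and let α_1, …, α_N ∈ [0, 2γ] with ∑_{j=1}^N α_j > 0. If ∑ i, exp(−c i · ∑_{j=1}^N α_j · h_j i) ≤ m · exp(−γ²·N/2), then for every i ∈ Fin m the margin satisfies c i · (∑_{j=1}^N α_j · h_j i)/(∑_{j=1}^N α_j) ≥ γ/8. -/
open Finset

/-- if the exponential loss is small enough, then all training points
have margin at least `γ/8`. -/
theorem stmt_10 (γ : ℝ) (hγ0 : 0 < γ) (hγ1 : γ < 1/2)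
    (m N : ℕ) (hm : 1 ≤ m) (hN : 0 < N)
    (hNlarge : (4 / γ^2) * Real.log m ≤ N)
    (c : Fin m → ℝ) (hc : ∀ i, c i = 1 ∨ c i = -1)
    (h : Fin N → Fin m → ℝ) (hh : ∀ j i, h j i = 1 ∨ h j i = -1)
    (a : Fin N → ℝ) (ha : ∀ j, a j ∈ Set.Icc 0 (2*γ)) (hasum : 0 < ∑ j, a j)
    (hexp : ∑ i, Real.exp (-(c i) * ∑ j, a j * h j i) ≤ m * Real.exp (-γ^2 * N / 2)) :
    ∀ i : Fin m, c i * ((∑ j, a j * h j i) / (∑ j, a j)) ≥ γ/8 := by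
  intro i
  have hγ2 : (0:ℝ) < γ^2 := by positivity
  have hlogm : Real.log m ≤ γ^2 * N / 4 := by
    rw [div_mul_eq_mul_div, div_le_iff₀ hγ2] at hNlarge
    nlinarith
  have hmpos : (0:ℝ) < m := by exact_mod_cast hm
  -- single term bound
  have hterm : Real.exp (-(c i) * ∑ j, a j * h j i) ≤ m * Real.exp (-γ^2 * N / 2) := by
    refine le_trans ?_ hexp
    exact Finset.single_le_sum (f := fun i => Real.exp (-(c i) * ∑ j, a j * h j i)) (fun j _ => (Real.exp_pos _).le) (Finset.mem_univ i)
  have hterm' : Real.exp (-(c i) * ∑ j, a j * h j i)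
      ≤ Real.exp (Real.log m + (-γ^2 * N / 2)) := by
    rwa [Real.exp_add, Real.exp_log hmpos]
  have hle := Real.exp_le_exp.mp hterm'
  have hcS : γ^2 * N / 4 ≤ c i * ∑ j, a j * h j i := by nlinarith
  -- bound on sum of a
  have hA : (∑ j, a j) ≤ 2 * γ * N := by
    calc (∑ j, a j) ≤ ∑ _j : Fin N, 2*γ :=
          Finset.sum_le_sum (fun j _ => (ha j).2)
      _ = 2 * γ * N := by simp [mul_comm]
  rw [mul_div_assoc' , ge_iff_le, le_div_iff₀ hasum]
  nlinarith
end

section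
/- Let m and n be positive integers, P and Q probability distributions on Fin m with the same support, and ε ≥ 0 with KL(P‖Q) ≤ ε. Let G ⊆ (Fin m)^n be a set of n-tuples with Pr_{P^n}[G] ≥ 1/2. Then Pr_{Q^n}[G] ≥ exp(−2·(n·ε + ln 2)), where P^n and Q^n denote the product distributions on (Fin m)^n and Pr_{P^n}[G] = ∑_{t ∈ G} P^n(t). -/
/-! For any constant `r > 0`, the inequality `log x ≤ x - 1` at `x = q r / p` gives
`p log r + p - q r ≤ p log (p / q)` pointwise. Summing it with `r = 1 / (2 Q^n(G))` on `G` and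
`r = 1 / 2` off `G` yields `P^n(G) · log (1 / Q^n(G)) ≤ KL(P^n‖Q^n) + log 2`.
Since `KL(P^n‖Q^n) = n · KL(P‖Q)` and `P^n(G) ≥ 1/2`, this gives
`log Q^n(G) ≥ -2 (n ε + log 2)`. -/

open Finset Real

/-- This is the Kullback–Leibler divergence when every atom of `p` is an atom of `q`;
otherwise the junk value `log (x / 0) = 0` enters. -/
noncomputable def discreteKL {α : Type*} [Fintype α] (p q : α → ℝ) : ℝ :=
  ∑ t, p t * log (p t / q t)

noncomputable def piDist {α : Type*} (ι : Type*) [Fintype ι] (p : α → ℝ) (t : ι → α) : ℝ :=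
  ∏ k, p (t k)

lemma mul_log_add_sub_mul_le_mul_log_div {p q r : ℝ} (hp : 0 ≤ p) (hq : 0 ≤ q)
    (hpq : 0 < p → 0 < q) (hr : 0 < r) :
    p * log r + p - q * r ≤ p * log (p / q) := by
  rcases hp.eq_or_lt with rfl | hp
  · simpa using mul_nonneg hq hr.le
  have hq := hpq hp
  have h := log_le_sub_one_of_pos (show 0 < q * r / p by positivity)
  rw [log_div (by positivity) hp.ne', log_mul hq.ne' hr.ne'] at h
  rw [log_div hp.ne' hq.ne']
  have hmul : p * (q * r / p - 1) = q * r - p := by field_simp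
  linarith [mul_le_mul_of_nonneg_left h hp.le]

lemma sum_mul_log_add_sub_mul_le {α : Type*} {p q : α → ℝ} (s : Finset α)
    (hp : ∀ t ∈ s, 0 ≤ p t) (hq : ∀ t ∈ s, 0 ≤ q t) (hpq : ∀ t ∈ s, 0 < p t → 0 < q t)
    {r : ℝ} (hr : 0 < r) :
    (∑ t ∈ s, p t) * log r + ∑ t ∈ s, p t - (∑ t ∈ s, q t) * r ≤
      ∑ t ∈ s, p t * log (p t / q t) := by
  rw [sum_mul, sum_mul, ← sum_add_distrib, ← sum_sub_distrib]
  exact sum_le_sum fun t ht =>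
    mul_log_add_sub_mul_le_mul_log_div (hp t ht) (hq t ht) (hpq t ht) hr

section Pi

variable {α ι : Type*} [Fintype ι] {p q : α → ℝ}

lemma piDist_nonneg (hp0 : ∀ i, 0 ≤ p i) (t : ι → α) : 0 ≤ piDist ι p t :=
  prod_nonneg fun k _ => hp0 (t k)

lemma piDist_pos_iff (hp0 : ∀ i, 0 ≤ p i) (t : ι → α) :
    0 < piDist ι p t ↔ ∀ k, 0 < p (t k) := by
  refine ⟨fun h k => (hp0 (t k)).lt_of_ne fun hk => h.ne' ?_, fun h => prod_pos fun k _ => h k⟩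
  exact prod_eq_zero (mem_univ k) hk.symm

variable [Fintype α] [DecidableEq ι]

lemma sum_piDist (hp1 : ∑ i, p i = 1) : ∑ t, piDist ι p t = 1 := by
  simp only [piDist, ← Fintype.prod_sum, hp1, prod_const_one]

lemma sum_piDist_mul_apply (hp1 : ∑ i, p i = 1) (g : α → ℝ) (j : ι) :
    ∑ t, piDist ι p t * g (t j) = ∑ i, p i * g i := by
  have hfactor : ∀ t : ι → α,
      piDist ι p t * g (t j) = ∏ k, p (t k) * (if k = j then g (t k) else 1) := fun t => by
    rw [prod_mul_distrib, prod_ite_eq' univ j, if_pos (mem_univ j), piDist]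
  have hcolumn : ∀ k,
      ∑ i, p i * (if k = j then g i else 1) = if k = j then ∑ i, p i * g i else 1 := fun k => by split_ifs <;> simp [hp1]
  rw [sum_congr rfl fun t _ => hfactor t,
    ← Fintype.prod_sum fun k i => p i * (if k = j then g i else 1)]
  simp only [hcolumn, prod_ite_eq', mem_univ, if_true]

lemma discreteKL_piDist (hp0 : ∀ i, 0 ≤ p i) (hp1 : ∑ i, p i = 1)
    (hpq : ∀ i, 0 < p i → 0 < q i) :
    discreteKL (piDist ι p) (piDist ι q) = Fintype.card ι * discreteKL p q := by
  have hterm : ∀ t : ι → α, piDist ι p t * log (piDist ι p t / piDist ι q t) =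
      piDist ι p t * ∑ k, log (p (t k) / q (t k)) := fun t => by
    by_cases ht : 0 < piDist ι p t
    · have hk := (piDist_pos_iff hp0 t).1 ht
      rw [piDist, piDist, ← prod_div_distrib,
        log_prod fun k _ => (div_pos (hk k) (hpq _ (hk k))).ne']
    · rw [le_antisymm (not_lt.1 ht) (piDist_nonneg hp0 t), zero_mul, zero_mul]
  rw [discreteKL, sum_congr rfl fun t _ => hterm t]
  simp only [mul_sum]
  rw [sum_comm]
  simp only [sum_piDist_mul_apply hp1 fun i => log (p i / q i)]
  rw [sum_const, card_univ, nsmul_eq_mul, discreteKL]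

end Pi

section Fintype

variable {α : Type*} [Fintype α] [DecidableEq α] {p q : α → ℝ}

lemma mul_neg_log_sum_le_discreteKL_add_log_two (hp0 : ∀ t, 0 ≤ p t) (hp1 : ∑ t, p t = 1)
    (hq0 : ∀ t, 0 ≤ q t) (hq1 : ∑ t, q t = 1) (hpq : ∀ t, 0 < p t → 0 < q t)
    (G : Finset α) (hb : 0 < ∑ t ∈ G, q t) :
    (∑ t ∈ G, p t) * -log (∑ t ∈ G, q t) ≤ discreteKL p q + log 2 := by
  set a := ∑ t ∈ G, p t
  set b := ∑ t ∈ G, q t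
  have hin := sum_mul_log_add_sub_mul_le G (fun t _ => hp0 t) (fun t _ => hq0 t)
    (fun t _ => hpq t) (r := 1 / (2 * b)) (by positivity)
  have hout := sum_mul_log_add_sub_mul_le Gᶜ (fun t _ => hp0 t) (fun t _ => hq0 t)
    (fun t _ => hpq t) (r := 1 / 2) (by positivity)
  have hpc : ∑ t ∈ Gᶜ, p t = 1 - a := by rw [← hp1, ← sum_add_sum_compl G]; ring
  have hqc : ∑ t ∈ Gᶜ, q t = 1 - b := by rw [← hq1, ← sum_add_sum_compl G]; ring
  have hKL : discreteKL p q =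
      ∑ t ∈ G, p t * log (p t / q t) + ∑ t ∈ Gᶜ, p t * log (p t / q t) :=
    (sum_add_sum_compl G _).symm
  rw [hpc, hqc, one_div, log_inv] at hout
  rw [one_div, log_inv, log_mul two_ne_zero hb.ne'] at hin
  have hhalf : b * (2 * b)⁻¹ = 1 / 2 := by field_simp
  linarith

theorem exp_neg_le_sum_of_discreteKL_le (hp0 : ∀ t, 0 ≤ p t) (hp1 : ∑ t, p t = 1)
    (hq0 : ∀ t, 0 ≤ q t) (hq1 : ∑ t, q t = 1) (hpq : ∀ t, 0 < p t → 0 < q t)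
    {κ : ℝ} (hKL : discreteKL p q ≤ κ) (G : Finset α) (hG : 1 / 2 ≤ ∑ t ∈ G, p t) :
    exp (-(2 * (κ + log 2))) ≤ ∑ t ∈ G, q t := by
  set b := ∑ t ∈ G, q t
  have hb : 0 < b := by
    obtain ⟨t, ht, hpt⟩ :=
      exists_lt_of_sum_lt (by rw [sum_const_zero]; linarith : ∑ t ∈ G, (0 : ℝ) < ∑ t ∈ G, p t)
    exact sum_pos' (fun t _ => hq0 t) ⟨t, ht, hpq t hpt⟩
  have hb1 : b ≤ 1 := hq1 ▸ sum_le_univ_sum_of_nonneg hq0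
  have hmain := mul_neg_log_sum_le_discreteKL_add_log_two hp0 hp1 hq0 hq1 hpq G hb
  have hlog : 0 ≤ -log b := neg_nonneg.2 (log_nonpos hb.le hb1)
  calc exp (-(2 * (κ + log 2))) ≤ exp (log b) := by
        gcongr; linarith [mul_le_mul_of_nonneg_right hG hlog]
    _ = b := exp_log hb

end Fintype

theorem stmt_11_general (m n : ℕ)
    (P Q : Fin m → ℝ)
    (hP0 : ∀ i, 0 ≤ P i) (hP1 : ∑ i, P i = 1)
    (hQ0 : ∀ i, 0 ≤ Q i) (hQ1 : ∑ i, Q i = 1)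
    (hsupp : ∀ i, 0 < P i ↔ 0 < Q i)
    (ε : ℝ)
    (hKL : ∑ i ∈ Finset.univ.filter (fun i => 0 < P i),
        P i * Real.log (P i / Q i) ≤ ε)
    (G : Finset (Fin n → Fin m))
    (hG : (1 : ℝ)/2 ≤ ∑ t ∈ G, ∏ j, P (t j)) :
    ∑ t ∈ G, ∏ j, Q (t j) ≥ Real.exp (-(2 * (n * ε + Real.log 2))) := by
  have hPQ : ∀ i, 0 < P i → 0 < Q i := fun i => (hsupp i).1
  rw [sum_filter_of_ne fun i _ h => (hP0 i).lt_of_ne fun h0 => h (by rw [← h0, zero_mul])] at hKL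
  have hKLn : discreteKL (piDist (Fin n) P) (piDist (Fin n) Q) ≤ n * ε := by
    rw [discreteKL_piDist hP0 hP1 hPQ, Fintype.card_fin]
    exact mul_le_mul_of_nonneg_left hKL n.cast_nonneg
  have hPQn (t : Fin n → Fin m) (ht : 0 < piDist (Fin n) P t) : 0 < piDist (Fin n) Q t :=
    (piDist_pos_iff hQ0 t).2 fun k => hPQ _ ((piDist_pos_iff hP0 t).1 ht k)
  exact exp_neg_le_sum_of_discreteKL_le (piDist_nonneg hP0) (sum_piDist hP1)
    (piDist_nonneg hQ0) (sum_piDist hQ1) hPQn hKLn G hG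

/-- an event of probability at least `1/2` under `P^n` has probability
at least `exp(-2(nε + ln 2))` under `Q^n`, provided `KL(P‖Q) ≤ ε`. -/
theorem stmt_11 (m n : ℕ) (hm : 0 < m) (hn : 0 < n)
    (P Q : Fin m → ℝ)
    (hP0 : ∀ i, 0 ≤ P i) (hP1 : ∑ i, P i = 1)
    (hQ0 : ∀ i, 0 ≤ Q i) (hQ1 : ∑ i, Q i = 1)
    (hsupp : ∀ i, 0 < P i ↔ 0 < Q i)
    (ε : ℝ) (hε : 0 ≤ ε)
    (hKL : ∑ i ∈ Finset.univ.filter (fun i => 0 < P i),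
        P i * Real.log (P i / Q i) ≤ ε)
    (G : Finset (Fin n → Fin m))
    (hG : (1 : ℝ)/2 ≤ ∑ t ∈ G, ∏ j, P (t j)) :
    ∑ t ∈ G, ∏ j, Q (t j) ≥ Real.exp (-(2 * (n * ε + Real.log 2))) :=
  stmt_11_general m n P Q hP0 hP1 hQ0 hQ1 hsupp ε hKL G hG
end

section
/- Let 0 < γ < 1/2, let m, R, R' be positive integers with 2 ≤ R' ≤ R, let D_1 be a probability distribution on Fin m with full support, let c, h_1, …, h_{R'−1} : Fin m → {−1,1}, set α = (1/2)·ln((1/2 + γ/2)/(1/2 − γ/2)), and let α_1, …, α_{R'−1} ∈ {0, α}. Define D_2, …, D_{R'} and Z_1, …, Z_{R'−1} by the boosting update. If KL(D_{R'}‖D_1) > 4·γ²·R, then either ∏_{r=1}^{R'−1} Z_r < exp(−2·γ²·R), or there exists r ∈ {1, …, R'−1} with α_r = α and ∑ i, D_{R'} i · c i · (−h_r i) > γ (equivalently, loss_{D_{R'}}(−h_r) < 1/2 − γ/2). -/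
open Finset

/-!
Unrolling the boosting update gives `log (D_{R'} i / D_1 i) = ∑ r, (-α_r c_i h_r(i) - log Z_r)`,
so `KL(D_{R'}‖D_1) = ∑ r, α_r · adv_r - log ∏ r, Z_r`, where `adv_r = ∑ i, D_{R'} i · c i · (-h_r i)`.
If every round with `α_r = α` has `adv_r ≤ γ`, then since `0 ≤ α ≤ 2γ` each summand is at most
`2γ²`, and if moreover `∏ Z_r ≥ exp(-2γ²R)`, the divergence is at most `2γ²(R' - 1) + 2γ²R ≤ 4γ²R`.
-/

section Tilting

variable {ι : Type*} [Fintype ι]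

def IsFullSupportDist (D : ι → ℝ) : Prop :=
  (∀ i, 0 < D i) ∧ ∑ i, D i = 1

theorem IsFullSupportDist.sum_mul_exp_pos {D : ι → ℝ} (hD : IsFullSupportDist D) (s : ι → ℝ) :
    0 < ∑ i, D i * Real.exp (s i) := by
  have hne : (univ : Finset ι).Nonempty :=
    nonempty_of_sum_ne_zero (hD.2 ▸ one_ne_zero)
  exact sum_pos (fun i _ => mul_pos (hD.1 i) (Real.exp_pos _)) hne

theorem IsFullSupportDist.tilt {D D' : ι → ℝ} (hD : IsFullSupportDist D) {s : ι → ℝ} {Z : ℝ}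
    (hZ : Z = ∑ i, D i * Real.exp (s i)) (hD' : ∀ i, D' i = D i * Real.exp (s i) / Z) :
    IsFullSupportDist D' ∧ ∀ i, Real.log (D' i / D i) = s i - Real.log Z := by
  have hZpos : 0 < Z := hZ ▸ hD.sum_mul_exp_pos s
  refine ⟨⟨fun i => ?_, ?_⟩, fun i => ?_⟩
  · rw [hD' i]
    exact div_pos (mul_pos (hD.1 i) (Real.exp_pos _)) hZpos
  · simp_rw [hD', ← sum_div, ← hZ, div_self hZpos.ne']
  · rw [hD' i, mul_div_assoc, mul_div_cancel_left₀ _ (hD.1 i).ne',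
      Real.log_div (Real.exp_pos _).ne' hZpos.ne', Real.log_exp]

theorem IsFullSupportDist.iterate_tilt {n : ℕ} {D : ℕ → ι → ℝ} (hD0 : IsFullSupportDist (D 0))
    {s : Fin n → ι → ℝ} {Z : Fin n → ℝ}
    (hZ : ∀ r : Fin n, Z r = ∑ i, D r i * Real.exp (s r i))
    (hD : ∀ r : Fin n, ∀ i, D (r + 1) i = D r i * Real.exp (s r i) / Z r) :
    ∀ k (hk : k ≤ n), IsFullSupportDist (D k) ∧ ∀ i, Real.log (D k i / D 0 i) =
      ∑ r : Fin k, (s (Fin.castLE hk r) i - Real.log (Z (Fin.castLE hk r))) := by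
  intro k
  induction k with
  | zero => exact fun _ => ⟨hD0, fun i => by simp [div_self (hD0.1 i).ne']⟩
  | succ k ih =>
    intro hk
    obtain ⟨hDk, hlogk⟩ := ih (by omega)
    obtain ⟨hDk', hlog⟩ := hDk.tilt (hZ ⟨k, hk⟩) (hD ⟨k, hk⟩)
    refine ⟨hDk', fun i => ?_⟩
    have hsplit : Real.log (D (k + 1) i / D 0 i) =
        Real.log (D (k + 1) i / D k i) + Real.log (D k i / D 0 i) := by
      rw [Real.log_div (hDk'.1 i).ne' (hDk.1 i).ne', Real.log_div (hDk.1 i).ne' (hD0.1 i).ne',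
        Real.log_div (hDk'.1 i).ne' (hD0.1 i).ne']
      ring
    rw [hsplit, hlog i, hlogk i, Fin.sum_univ_castSucc]
    simp only [Fin.castLE_castSucc]
    exact add_comm _ _

theorem sum_mul_log_div_eq_of_log_div_eq {κ : Type*} [Fintype κ] {p q : ι → ℝ}
    {s : κ → ι → ℝ} {L : κ → ℝ} (hp : ∑ i, p i = 1)
    (hlog : ∀ i, Real.log (p i / q i) = ∑ r, (s r i - L r)) :
    ∑ i, p i * Real.log (p i / q i) = ∑ r, ∑ i, p i * s r i - ∑ r, L r := by
  simp_rw [hlog, mul_sum, mul_sub]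
  rw [sum_comm, ← sum_sub_distrib]
  refine sum_congr rfl fun r _ => ?_
  rw [sum_sub_distrib, ← sum_mul, hp, one_mul]

end Tilting

section BoostingStepSize

noncomputable def boostAlpha (γ : ℝ) : ℝ :=
  (1/2) * Real.log ((1/2 + γ/2)/(1/2 - γ/2))

variable {γ : ℝ}

theorem boostAlpha_nonneg (hγ0 : 0 ≤ γ) (hγ1 : γ < 1/2) : 0 ≤ boostAlpha γ := by
  have hratio : 1 ≤ (1/2 + γ/2)/(1/2 - γ/2) := by
    rw [le_div_iff₀ (by linarith)]; linarith
  unfold boostAlpha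
  have := Real.log_nonneg hratio
  linarith

theorem boostAlpha_le_two_mul (hγ0 : 0 ≤ γ) (hγ1 : γ < 1/2) : boostAlpha γ ≤ 2 * γ := by
  have hratio : (1/2 + γ/2)/(1/2 - γ/2) ≤ Real.exp (4 * γ) := by
    have hle : (1/2 + γ/2)/(1/2 - γ/2) ≤ 4 * γ + 1 := by
      rw [div_le_iff₀ (by linarith)]; nlinarith
    exact hle.trans (Real.add_one_le_exp _)
  have hlog := (Real.log_le_iff_le_exp (div_pos (by linarith) (by linarith))).2 hratio
  unfold boostAlpha
  linarith

theorem mul_le_two_mul_sq_of_eq_zero_or_eq_boostAlpha (hγ0 : 0 ≤ γ) (hγ1 : γ < 1/2) {a x : ℝ}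
    (ha : a = 0 ∨ a = boostAlpha γ) (hx : a = boostAlpha γ → x ≤ γ) : a * x ≤ 2 * γ ^ 2 := by
  rcases ha with rfl | rfl
  · rw [zero_mul]; positivity
  · calc boostAlpha γ * x ≤ boostAlpha γ * γ :=
          mul_le_mul_of_nonneg_left (hx rfl) (boostAlpha_nonneg hγ0 hγ1)
      _ ≤ 2 * γ * γ := mul_le_mul_of_nonneg_right (boostAlpha_le_two_mul hγ0 hγ1) hγ0
      _ = 2 * γ ^ 2 := by ring

end BoostingStepSize

theorem stmt_14_general (γ : ℝ) (hγ0 : 0 < γ) (hγ1 : γ < 1/2)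
    (m R R' : ℕ) (hR'R : R' ≤ R)
    (D : ℕ → Fin m → ℝ)
    (hD0pos : ∀ i, 0 < D 0 i) (hD0sum : ∑ i, D 0 i = 1)
    (c : Fin m → ℝ)
    (h : Fin (R' - 1) → Fin m → ℝ)
    (α : Fin (R' - 1) → ℝ)
    (hα : ∀ r, α r = 0 ∨ α r = (1/2) * Real.log ((1/2 + γ/2)/(1/2 - γ/2)))
    (Z : Fin (R' - 1) → ℝ)
    (hZ : ∀ r : Fin (R' - 1), Z r = ∑ i, D r i * Real.exp (-(α r) * c i * h r i))
    (hDs : ∀ r : Fin (R' - 1), ∀ i,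
      D (r + 1) i = D r i * Real.exp (-(α r) * c i * h r i) / Z r)
    (hKL : 4 * γ^2 * R <
      ∑ i, D (R' - 1) i * Real.log (D (R' - 1) i / D 0 i)) :
    (∏ r, Z r < Real.exp (-(2 * γ^2 * R)))
      ∨ ∃ r : Fin (R' - 1),
          α r = (1/2) * Real.log ((1/2 + γ/2)/(1/2 - γ/2))
            ∧ γ < ∑ i, D (R' - 1) i * c i * (-(h r i)) := by
  by_contra! hcon
  obtain ⟨hprod, hadv⟩ := hcon
  have hD0 : IsFullSupportDist (D 0) := ⟨hD0pos, hD0sum⟩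
  have hiter := hD0.iterate_tilt hZ hDs
  obtain ⟨hDlast, hlog⟩ := hiter (R' - 1) le_rfl
  simp only [Fin.castLE_rfl, id] at hlog
  have hZpos r : 0 < Z r := hZ r ▸ (hiter r r.isLt.le).1.sum_mul_exp_pos _
  have hlogZ : -(2 * γ ^ 2 * R) ≤ ∑ r, Real.log (Z r) := by
    rw [← Real.log_prod fun r _ => (hZpos r).ne']
    exact (Real.le_log_iff_exp_le (prod_pos fun r _ => hZpos r)).2 hprod
  have hterms : ∑ r, ∑ i, D (R' - 1) i * (-(α r) * c i * h r i) ≤ (R' - 1 : ℕ) * (2 * γ ^ 2) := by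
    have hbound := sum_le_card_nsmul univ _ (2 * γ ^ 2) fun r _ =>
      mul_le_two_mul_sq_of_eq_zero_or_eq_boostAlpha hγ0.le hγ1 (hα r) (hadv r)
    rw [card_univ, Fintype.card_fin, nsmul_eq_mul] at hbound
    refine le_of_eq_of_le (sum_congr rfl fun r _ => ?_) hbound
    rw [mul_sum]
    exact sum_congr rfl fun i _ => by ring
  have hrounds : ((R' - 1 : ℕ) : ℝ) * (2 * γ ^ 2) ≤ R * (2 * γ ^ 2) :=
    mul_le_mul_of_nonneg_right (Nat.cast_le.2 (by omega)) (by positivity)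
  rw [sum_mul_log_div_eq_of_log_div_eq hDlast.2 hlog] at hKL
  linarith

/-- if the KL divergence `KL(D_{R'}‖D_1)` exceeds `4γ²R`, then either
the product of the normalization factors is already small, or the negation of one of
the previously used hypotheses has advantage more than `γ/2` under `D_{R'}`.
Here `D k` denotes `D_{k+1}`, i.e. `D 0` is the initial distribution `D_1`. -/
theorem stmt_14 (γ : ℝ) (hγ0 : 0 < γ) (hγ1 : γ < 1/2)
    (m R R' : ℕ) (hm : 0 < m) (hR'2 : 2 ≤ R') (hR'R : R' ≤ R)
    (D : ℕ → Fin m → ℝ)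
    (hD0pos : ∀ i, 0 < D 0 i) (hD0sum : ∑ i, D 0 i = 1)
    (c : Fin m → ℝ) (hc : ∀ i, c i = 1 ∨ c i = -1)
    (h : Fin (R' - 1) → Fin m → ℝ) (hh : ∀ r i, h r i = 1 ∨ h r i = -1)
    (α : Fin (R' - 1) → ℝ)
    (hα : ∀ r, α r = 0 ∨ α r = (1/2) * Real.log ((1/2 + γ/2)/(1/2 - γ/2)))
    (Z : Fin (R' - 1) → ℝ)
    (hZ : ∀ r : Fin (R' - 1), Z r = ∑ i, D r i * Real.exp (-(α r) * c i * h r i))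
    (hDs : ∀ r : Fin (R' - 1), ∀ i,
      D (r + 1) i = D r i * Real.exp (-(α r) * c i * h r i) / Z r)
    (hKL : 4 * γ^2 * R <
      ∑ i, D (R' - 1) i * Real.log (D (R' - 1) i / D 0 i)) :
    (∏ r, Z r < Real.exp (-(2 * γ^2 * R)))
      ∨ ∃ r : Fin (R' - 1),
          α r = (1/2) * Real.log ((1/2 + γ/2)/(1/2 - γ/2))
            ∧ γ < ∑ i, D (R' - 1) i * c i * (-(h r i)) :=
  stmt_14_general γ hγ0 hγ1 m R R' hR'R D hD0pos hD0sum c h α hα Z hZ hDs hKL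
end

section
/- There exists a universal constant C ≥ 1 such that the following holds. For every positive integer n, every real β with 0 < β ≤ 1/4, and every function f : {−1,1}^n → {−1,1}: if c is a uniformly random sign in {−1,1} and, conditionally on c, b = (b_1, …, b_n) has independent coordinates with Pr[b_i = c] = 1/2 + β for each i, then Pr[f(b) ≠ c] ≥ exp(−C·β²·n)/C. -/
open Finset

/-- The conditional probability of seeing the flips `b` given direction `c`. -/
noncomputable def coinP (n : ℕ) (β : ℝ) (b : Fin n → Bool) (c : Bool) : ℝ :=
  ∏ i, if b i = c then 1/2 + β else 1/2 - β

lemma coin_aux (n : ℕ) (β : ℝ) (hβ0 : 0 ≤ β) (hβ : β ≤ 1/4) (f : (Fin n → Bool) → Bool) :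
    ((1:ℝ) - 4*β^2)^n / 4 ≤ (1/2 : ℝ) * ∑ c : Bool, ∑ b : Fin n → Bool,
      coinP n β b c * (if f b ≠ c then 1 else 0) := by
  have h1 : (0:ℝ) ≤ 1/2 - β := by linarith
  have h2 : (0:ℝ) ≤ 1/2 + β := by linarith
  have hpos : ∀ b c, 0 ≤ coinP n β b c := by
    intro b c
    apply Finset.prod_nonneg
    intro i _
    split <;> assumption
  have hmul : ∀ b, coinP n β b true * coinP n β b false = ((1:ℝ)/4 - β^2)^n := by
    intro b
    have hfac : ∀ i : Fin n, ((if b i = true then 1/2 + β else 1/2 - β) *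
        if b i = false then 1/2 + β else 1/2 - β) = (1:ℝ)/4 - β^2 := by
      intro i
      cases h : b i <;> simp [h] <;> ring
    unfold coinP
    rw [← Finset.prod_mul_distrib, Finset.prod_congr rfl (fun i _ => hfac i),
      Finset.prod_const, Finset.card_univ, Fintype.card_fin]
  have hsum : ∀ c, ∑ b : Fin n → Bool, coinP n β b c = 1 := by
    intro c
    unfold coinP
    rw [← Fintype.piFinset_univ,
      Finset.sum_prod_piFinset Finset.univ
        (fun (_ : Fin n) (x : Bool) => if x = c then 1/2 + β else 1/2 - β)]
    apply Finset.prod_eq_one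
    intro i _
    cases c <;> simp <;> ring
  rw [Finset.sum_comm]
  have hpt : ∀ b, (∑ c : Bool, coinP n β b c * (if f b ≠ c then (1:ℝ) else 0))
      = coinP n β b (!f b) := by
    intro b
    rw [Fintype.sum_bool]
    cases h : f b <;> simp [h]
  rw [Finset.sum_congr rfl (fun b _ => hpt b)]
  have hR : ∑ b : Fin n → Bool, coinP n β b (f b) ≤ 2 := by
    have hle : ∑ b : Fin n → Bool, coinP n β b (f b)
        ≤ ∑ b : Fin n → Bool, (coinP n β b true + coinP n β b false) := by
      apply Finset.sum_le_sum
      intro b _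
      cases h : f b <;> simp [h] <;> nlinarith [hpos b true, hpos b false]
    rw [Finset.sum_add_distrib, hsum true, hsum false] at hle
    linarith
  have hβ2 : (0:ℝ) ≤ 1/4 - β^2 := by nlinarith
  have hX : (0:ℝ) ≤ ((1:ℝ)/4 - β^2)^n := pow_nonneg hβ2 n
  have hconst : ∀ b : Fin n → Bool,
      Real.sqrt (coinP n β b (!f b)) * Real.sqrt (coinP n β b (f b))
      = Real.sqrt (((1:ℝ)/4 - β^2)^n) := by
    intro b
    rw [← Real.sqrt_mul (hpos b (!f b))]
    congr 1
    cases h : f b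
    · simpa [h] using hmul b
    · simpa [h, mul_comm] using hmul b
  have hCS := Finset.sum_mul_sq_le_sq_mul_sq Finset.univ
      (fun b : Fin n → Bool => Real.sqrt (coinP n β b (!f b)))
      (fun b : Fin n → Bool => Real.sqrt (coinP n β b (f b)))
  simp only [Real.sq_sqrt (hpos _ _)] at hCS
  rw [Finset.sum_congr rfl (fun b _ => hconst b)] at hCS
  rw [Finset.sum_const, Finset.card_univ] at hCS
  have hcard : Fintype.card (Fin n → Bool) = 2^n := by simp
  rw [hcard] at hCS
  have hsq : ((2^n : ℕ) • Real.sqrt (((1:ℝ)/4 - β^2)^n))^2 = ((1:ℝ) - 4*β^2)^n := by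
    rw [nsmul_eq_mul, mul_pow, Real.sq_sqrt hX]
    push_cast
    rw [← pow_mul, mul_comm n 2, pow_mul, ← mul_pow]
    congr 1
    ring
  rw [hsq] at hCS
  have hWpos : 0 ≤ ∑ b : Fin n → Bool, coinP n β b (!f b) :=
    Finset.sum_nonneg fun b _ => hpos b (!f b)
  nlinarith [hCS, hR, hWpos]

/-- the coin problem — any procedure guessing the direction of the bias
of `n` coin flips with bias `β` fails with probability at least `exp(-Cβ²n)/C`.
Signs in `{-1,1}` are modelled by `Bool` (`true ↔ 1`, `false ↔ -1`). -/
theorem stmt_15 : ∃ C : ℝ, 1 ≤ C ∧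
    ∀ (n : ℕ), 0 < n →
    ∀ (β : ℝ), 0 < β → β ≤ 1/4 →
    ∀ f : (Fin n → Bool) → Bool,
      (1/2 : ℝ) * ∑ c : Bool, ∑ b : Fin n → Bool,
          (∏ i, (if b i = c then 1/2 + β else 1/2 - β)) * (if f b ≠ c then 1 else 0)
        ≥ Real.exp (-(C * β^2 * n)) / C := by
  refine ⟨8, by norm_num, ?_⟩
  intro n _hn β hβ hβ4 f
  have hmain := coin_aux n β hβ.le hβ4 f
  simp only [coinP] at hmain
  have hx : Real.exp (-(8*β^2)) ≤ 1 - 4*β^2 := by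
    have h1 : Real.exp (-(8*β^2)) * Real.exp (8*β^2) = 1 := by
      rw [← Real.exp_add]; simp
    have h2 := mul_le_mul_of_nonneg_left (Real.add_one_le_exp (8*β^2))
      (Real.exp_pos (-(8*β^2))).le
    have h3 : β * β ≤ 1/16 := by nlinarith
    nlinarith [Real.exp_pos (-(8*β^2)), h1, h2, sq_nonneg β, h3, hβ, hβ4]
  have hxn : (Real.exp (-(8*β^2)))^n ≤ (1 - 4*β^2)^n :=
    pow_le_pow_left₀ (Real.exp_nonneg _) hx n
  have hexp : Real.exp (-(8*β^2*n)) = (Real.exp (-(8*β^2)))^n := by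
    rw [← Real.exp_nat_mul]
    congr 1
    ring
  have hfinal : Real.exp (-(8*β^2*n)) / 8 ≤ ((1:ℝ) - 4*β^2)^n / 4 := by
    rw [hexp]
    linarith [hxn, pow_nonneg (Real.exp_nonneg (-(8*β^2))) n]
  calc Real.exp (-(8*β^2*n)) / 8 ≤ ((1:ℝ) - 4*β^2)^n / 4 := hfinal
    _ ≤ _ := hmain
end

section
/- There exists a universal constant C ≥ 1 such that the following holds. Let m, p, R, u be positive integers, let 0 < β ≤ 1/4, and let S ∈ [2m]^m be a fixed tuple with |S| distinct entries. Let c be uniformly random in {−1,1}^{2m}. Let H be a random matrix with p·(u + R) rows in {−1,1}^{2m}, all rows mutually independent conditionally on c, where p·u of the rows are uniform in {−1,1}^{2m} (independent of c) and p·R of the rows have independent entries with Pr[row(i) = c(i)] = 1/2 + β for each i ∈ [2m]. Then for every function B mapping the pair (the labels (c(S_1), …, c(S_m)), the matrix H) to a vector in {−1,1}^{2m}, with probability at least 1 − exp(−(2m − |S|)·exp(−C·β²·R·p)/(8C)) over (c, H), the number of indices i ∈ [2m] with B(c(S), H)(i) ≠ c(i) is at least (2m − |S|)·exp(−C·β²·R·p)/(2C).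 -/
open Finset

open scoped Classical

lemma sum_pi_prod' {ι : Type*} {κ : ι → Type*} [Fintype ι] [DecidableEq ι] [∀ i, Fintype (κ i)]
    (f : ∀ i, κ i → ℝ) : ∑ g : ∀ i, κ i, ∏ i, f i (g i) = ∏ i, ∑ b, f i b :=
  (Fintype.prod_sum f).symm

lemma core_bound {ι : Type*} [Fintype ι] [DecidableEq ι] (p : ι → Prop) [DecidablePred p]
    (w : ι → Bool → ℝ) (hw : ∀ i b, 0 ≤ w i b)
    (G : (ι → Bool) → ι → Bool)
    (hG : ∀ c c' : ι → Bool, (∀ i, p i → c i = c' i) → ∀ i, G c i = G c' i) :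
    ∑ c : ι → Bool, (∏ i, w i (c i)) *
        ∏ i ∈ univ.filter (fun i => ¬ p i), (if G c i = c i then (1:ℝ) else Real.exp (-1))
      ≤ (∏ i ∈ univ.filter p, (w i false + w i true)) *
        ∏ i ∈ univ.filter (fun i => ¬ p i),
          (w i false + w i true - (1 - Real.exp (-1)) * min (w i false) (w i true)) := by
  classical
  set E := Equiv.piEquivPiSubtypeProd p (fun _ : ι => Bool) with hE
  have hmemp : ∀ x : ι, x ∈ univ.filter p ↔ p x := by intro x; simp
  have hmemnp : ∀ x : ι, x ∈ univ.filter (fun i => ¬ p i) ↔ ¬ p x := by intro x; simp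
  set c₀ : (∀ i : {x // p x}, Bool) → (ι → Bool) :=
    fun a => E.symm (a, fun _ => false) with hc₀
  have hc₀p : ∀ a (i : ι) (h : p i), c₀ a i = a ⟨i, h⟩ := by
    intro a i h
    simp [hc₀, hE, Equiv.piEquivPiSubtypeProd, dif_pos h]
  have hsymm : ∀ a b (i : ι), E.symm (a, b) i = if h : p i then a ⟨i, h⟩ else b ⟨i, h⟩ := by
    intro a b i; simp [hE, Equiv.piEquivPiSubtypeProd]
  rw [← Equiv.sum_comp E.symm]
  rw [Fintype.sum_prod_type]
  have key : ∀ a : ∀ i : {x // p x}, Bool,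
      ∑ b : ∀ i : {x // ¬ p x}, Bool,
        (∏ i, w i (E.symm (a, b) i)) *
          ∏ i ∈ univ.filter (fun i => ¬ p i),
            (if G (E.symm (a, b)) i = (E.symm (a, b)) i then (1:ℝ) else Real.exp (-1))
      ≤ (∏ i ∈ univ.filter p, w i (c₀ a i)) *
        ∏ i ∈ univ.filter (fun i => ¬ p i),
          (w i false + w i true - (1 - Real.exp (-1)) * min (w i false) (w i true)) := by
    intro a
    have hGa : ∀ b, ∀ i, G (E.symm (a, b)) i = G (c₀ a) i := by
      intro b i
      refine hG _ _ (fun j hj => ?_) i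
      rw [hsymm, dif_pos hj, hc₀p a j hj]
    have step1 : ∀ b : ∀ i : {x // ¬ p x}, Bool,
        (∏ i, w i (E.symm (a, b) i)) *
          ∏ i ∈ univ.filter (fun i => ¬ p i),
            (if G (E.symm (a, b)) i = (E.symm (a, b)) i then (1:ℝ) else Real.exp (-1))
        = (∏ i ∈ univ.filter p, w i (c₀ a i)) *
          ∏ j : {x // ¬ p x},
            (w j.1 (b j) * (if G (c₀ a) j.1 = b j then (1:ℝ) else Real.exp (-1))) := by
      intro b
      rw [← Finset.prod_filter_mul_prod_filter_not univ p (fun i => w i (E.symm (a, b) i))]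
      have e1 : ∏ i ∈ univ.filter p, w i (E.symm (a, b) i)
          = ∏ i ∈ univ.filter p, w i (c₀ a i) := by
        refine Finset.prod_congr rfl (fun i hi => ?_)
        have hp : p i := (hmemp i).1 hi
        rw [hsymm, dif_pos hp, hc₀p a i hp]
      have e2 : ∏ i ∈ univ.filter (fun i => ¬ p i),
            (if G (E.symm (a, b)) i = (E.symm (a, b)) i then (1:ℝ) else Real.exp (-1))
          = ∏ i ∈ univ.filter (fun i => ¬ p i), (fun i =>
            (if G (c₀ a) i = (E.symm (a, b)) i then (1:ℝ) else Real.exp (-1))) i := by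
        refine Finset.prod_congr rfl (fun i hi => ?_)
        rw [hGa b i]
      rw [e1, e2, mul_assoc, ← Finset.prod_mul_distrib]
      congr 1
      rw [Finset.prod_subtype (univ.filter (fun i => ¬ p i)) hmemnp
        (fun i => w i (E.symm (a, b) i) *
          (if G (c₀ a) i = (E.symm (a, b)) i then (1:ℝ) else Real.exp (-1)))]
      refine Finset.prod_congr rfl (fun j _ => ?_)
      rw [hsymm, dif_neg j.2]
    calc ∑ b : ∀ i : {x // ¬ p x}, Bool,
        (∏ i, w i (E.symm (a, b) i)) *
          ∏ i ∈ univ.filter (fun i => ¬ p i),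
            (if G (E.symm (a, b)) i = (E.symm (a, b)) i then (1:ℝ) else Real.exp (-1))
        = (∏ i ∈ univ.filter p, w i (c₀ a i)) *
          ∑ b : ∀ i : {x // ¬ p x}, Bool, ∏ j : {x // ¬ p x},
            (w j.1 (b j) * (if G (c₀ a) j.1 = b j then (1:ℝ) else Real.exp (-1))) := by
          rw [Finset.mul_sum]; exact Finset.sum_congr rfl (fun b _ => step1 b)
      _ = (∏ i ∈ univ.filter p, w i (c₀ a i)) *
          ∏ j : {x // ¬ p x}, ∑ ε : Bool,
            (w j.1 ε * (if G (c₀ a) j.1 = ε then (1:ℝ) else Real.exp (-1))) := by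
          congr 1
          exact sum_pi_prod' (fun (j : {x // ¬ p x}) (ε : Bool) => w j.1 ε *
            (if G (c₀ a) j.1 = ε then (1:ℝ) else Real.exp (-1)))
      _ ≤ (∏ i ∈ univ.filter p, w i (c₀ a i)) *
          ∏ j : {x // ¬ p x},
            (w j.1 false + w j.1 true
              - (1 - Real.exp (-1)) * min (w j.1 false) (w j.1 true)) := by
          have hexp1 : Real.exp (-1) ≤ 1 := by
            rw [Real.exp_le_one_iff]; norm_num
          have hexp0 : (0:ℝ) ≤ Real.exp (-1) := (Real.exp_pos _).le
          refine mul_le_mul_of_nonneg_left ?_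
            (Finset.prod_nonneg (fun i _ => hw i _))
          refine Finset.prod_le_prod (fun j _ => ?_) (fun j _ => ?_)
          · refine Finset.sum_nonneg (fun ε _ => mul_nonneg (hw _ _) ?_)
            split <;> [norm_num; exact hexp0]
          · rw [Fintype.sum_bool]
            rcases Bool.eq_false_or_eq_true (G (c₀ a) j.1) with h | h
            · rw [h, if_pos rfl, if_neg (by simp)]
              nlinarith [min_le_left (w j.1 false) (w j.1 true),
                min_le_right (w j.1 false) (w j.1 true), hw j.1 false, hw j.1 true]
            · rw [h, if_neg (by simp), if_pos rfl]
              nlinarith [min_le_left (w j.1 false) (w j.1 true),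
                min_le_right (w j.1 false) (w j.1 true), hw j.1 false, hw j.1 true]
      _ = (∏ i ∈ univ.filter p, w i (c₀ a i)) *
          ∏ i ∈ univ.filter (fun i => ¬ p i),
            (w i false + w i true - (1 - Real.exp (-1)) * min (w i false) (w i true)) := by
          congr 1
          rw [Finset.prod_subtype (univ.filter (fun i => ¬ p i)) hmemnp
            (fun i => w i false + w i true
              - (1 - Real.exp (-1)) * min (w i false) (w i true))]
  calc ∑ a, ∑ b, _ ≤ ∑ a : ∀ i : {x // p x}, Bool,
        (∏ i ∈ univ.filter p, w i (c₀ a i)) *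
        ∏ i ∈ univ.filter (fun i => ¬ p i),
          (w i false + w i true - (1 - Real.exp (-1)) * min (w i false) (w i true)) :=
        Finset.sum_le_sum (fun a _ => key a)
    _ = (∑ a : ∀ i : {x // p x}, Bool, ∏ i ∈ univ.filter p, w i (c₀ a i)) *
        ∏ i ∈ univ.filter (fun i => ¬ p i),
          (w i false + w i true - (1 - Real.exp (-1)) * min (w i false) (w i true)) := by
        rw [Finset.sum_mul]
    _ = (∏ i ∈ univ.filter p, (w i false + w i true)) *
        ∏ i ∈ univ.filter (fun i => ¬ p i),
          (w i false + w i true - (1 - Real.exp (-1)) * min (w i false) (w i true)) := by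
        congr 1
        have : ∀ a : ∀ i : {x // p x}, Bool,
            ∏ i ∈ univ.filter p, w i (c₀ a i) = ∏ j : {x // p x}, w j.1 (a j) := by
          intro a
          rw [Finset.prod_subtype (univ.filter p) hmemp (fun i => w i (c₀ a i))]
          exact Finset.prod_congr rfl (fun j _ => by rw [hc₀p a j.1 j.2])
        rw [Finset.sum_congr rfl (fun a _ => this a), sum_pi_prod']
        rw [Finset.prod_subtype (univ.filter p) hmemp
          (fun i => w i false + w i true)]
        exact Finset.prod_congr rfl (fun j _ => by rw [Fintype.sum_bool]; ring)

lemma aux_pointwise' {ι : Type*} [Fintype ι] [DecidableEq ι] (T : Finset ι) (P : ι → Prop)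
    [DecidablePred P] (t : ℝ) (X : ℕ)
    (hX : ((T.filter (fun i => ¬ P i)).card : ℝ) ≤ (X:ℝ)) :
    (1:ℝ) - Real.exp t * ∏ i ∈ T, (if P i then (1:ℝ) else Real.exp (-1))
      ≤ if t ≤ (X:ℝ) then (1:ℝ) else 0 := by
  by_cases h : t ≤ (X:ℝ)
  · rw [if_pos h]
    have h0 : 0 ≤ Real.exp t * ∏ i ∈ T, (if P i then (1:ℝ) else Real.exp (-1)) := by
      refine mul_nonneg (Real.exp_pos t).le (Finset.prod_nonneg (fun i _ => ?_))
      split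
      · norm_num
      · exact (Real.exp_pos _).le
    linarith
  · rw [if_neg h]
    push_neg at h
    set k := (T.filter (fun i => ¬ P i)).card with hk
    have hkt : (k:ℝ) < t := lt_of_le_of_lt hX h
    have hprod : ∏ i ∈ T, (if P i then (1:ℝ) else Real.exp (-1))
        = Real.exp (-1) ^ k := by
      rw [← Finset.prod_filter_mul_prod_filter_not T P]
      rw [Finset.prod_congr rfl (fun i hi => if_pos (Finset.mem_filter.mp hi).2),
        Finset.prod_const_one, one_mul]
      rw [Finset.prod_congr rfl (fun i hi => if_neg (Finset.mem_filter.mp hi).2),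
        Finset.prod_const]
    rw [hprod, ← Real.exp_nat_mul, ← Real.exp_add]
    have h1 : (1:ℝ) ≤ Real.exp (t + k * (-1)) :=
      Real.one_le_exp (by nlinarith)
    linarith
lemma aux_factor (β : ℝ) (hβ2 : β^2 ≤ 1/16) : Real.exp (-(6*β^2)) ≤ 1 - 4*β^2 := by
  have hkey : 1 ≤ (1 - 4*β^2) * Real.exp (6*β^2) := by
    nlinarith [Real.add_one_le_exp (6*β^2), Real.exp_pos (6*β^2), sq_nonneg β]
  calc Real.exp (-(6*β^2)) = 1 / Real.exp (6*β^2) := by rw [Real.exp_neg, one_div]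
    _ ≤ 1 - 4*β^2 := by
        rw [div_le_iff₀ (Real.exp_pos _)]; linarith

lemma aux_final (T E M : ℝ) (k : ℕ) (hT : 0 ≤ T) (hE : 0 < E) (hE1 : E ≤ 1)
    (hM2 : E/2 ≤ M) (hM1 : M ≤ 1) (hk : (k:ℝ) = T) :
    Real.exp (T * E / (2*6)) * (1 - (1 - Real.exp (-1)) * (M/2))^k
      ≤ Real.exp (-(T * E / (8*6))) := by
  have hee : Real.exp (-1) * Real.exp 1 = 1 := by rw [← Real.exp_add]; norm_num
  have h2 : (2:ℝ) ≤ Real.exp 1 := by nlinarith [Real.add_one_le_exp 1]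
  have he2 : Real.exp (-1) ≤ 7/12 := by nlinarith [Real.exp_pos (-1)]
  have he0 : (0:ℝ) < Real.exp (-1) := Real.exp_pos _
  have hM0 : 0 ≤ M := by linarith
  set z := (1 - Real.exp (-1)) * (M/2) with hz
  have hz0 : 0 ≤ z := by nlinarith
  have hz1 : z ≤ 1 := by nlinarith
  have hρ0 : (0:ℝ) ≤ 1 - z := by linarith
  have hρe : 1 - z ≤ Real.exp (-z) := by nlinarith [Real.add_one_le_exp (-z)]
  have hz5 : 5*E/48 ≤ z := by nlinarith
  calc Real.exp (T*E/(2*6)) * (1-z)^k ≤ Real.exp (T*E/(2*6)) * (Real.exp (-z))^k :=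
      mul_le_mul_of_nonneg_left (pow_le_pow_left₀ hρ0 hρe k) (Real.exp_pos _).le
    _ = Real.exp (T*E/(2*6) + k * (-z)) := by rw [← Real.exp_nat_mul, ← Real.exp_add]
    _ ≤ Real.exp (-(T*E/(8*6))) := by
        apply Real.exp_le_exp.mpr
        rw [hk]
        nlinarith [mul_le_mul_of_nonneg_left hz5 hT]


set_option maxHeartbeats 1000000

/-- lower bound on the number of labels of a random concept `c` on `[2m]`
that any function `B` of the sample labels `c(S)` and the random hypothesis matrix
(consisting of `p·u` uniform rows and `p·R` rows `β`-biased towards `c`) fails to guess.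
Signs in `{-1,1}` are modelled by `Bool`, and the matrix is split into its uniform
part `U` and its biased part `Bm`. -/
theorem stmt_17 : ∃ C : ℝ, 1 ≤ C ∧
    ∀ (m p R u : ℕ), 0 < m → 0 < p → 0 < R → 0 < u →
    ∀ (β : ℝ), 0 < β → β ≤ 1/4 →
    ∀ (S : Fin m → Fin (2*m)),
    ∀ (B : (Fin m → Bool) →
        (Fin (p*u) → Fin (2*m) → Bool) × (Fin (p*R) → Fin (2*m) → Bool) →
        (Fin (2*m) → Bool)),
      ∑ c : Fin (2*m) → Bool, ∑ U : Fin (p*u) → Fin (2*m) → Bool,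
        ∑ Bm : Fin (p*R) → Fin (2*m) → Bool,
          (((1/2 : ℝ)^(2*m)) * ((1/2 : ℝ)^(p*u*(2*m))) *
              ∏ r : Fin (p*R), ∏ i : Fin (2*m),
                (if Bm r i = c i then 1/2 + β else 1/2 - β)) *
            (if (((2*m : ℝ) - ((Finset.univ.image S).card : ℝ)) *
                    Real.exp (-(C * β^2 * R * p)) / (2*C)
                  ≤ ((Finset.univ.filter
                      (fun i : Fin (2*m) => B (fun j => c (S j)) (U, Bm) i ≠ c i)).card : ℝ))
              then 1 else 0)
        ≥ 1 - Real.exp (-(((2*m : ℝ) - ((Finset.univ.image S).card : ℝ)) *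
            Real.exp (-(C * β^2 * R * p)) / (8*C))) := by
  refine ⟨6, by norm_num, ?_⟩
  intro m p R u hm hp hR hu β hβ0 hβ4 S B
  set P : Finset (Fin (2*m)) := Finset.univ.image S with hP
  set f : Bool → Bool → ℝ := fun b ε => if b = ε then 1/2 + β else 1/2 - β with hf
  set A : Bool → (Fin (p*R) → Bool) → ℝ := fun ε y => ∏ r, f (y r) ε with hA
  set E0 : ℝ := Real.exp (-(6*β^2*R*p)) with hE0
  set TcR : ℝ := (2*m : ℝ) - (P.card : ℝ) with hTcR
  set t' : ℝ := TcR * E0 / (2*6) with ht'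
  set s' : ℝ := TcR * E0 / (8*6) with hs'
  set Mμ : ℝ := ∑ y : Fin (p*R) → Bool, min (A false y) (A true y) with hMμ
  set ρ : ℝ := 1 - (1 - Real.exp (-1)) * (Mμ/2) with hρ
  -- rewrite the biased weights in the goal in terms of `f`
  simp only [show ∀ (b ε : Bool), (if b = ε then (1/2:ℝ) + β else 1/2 - β) = f b ε
    from fun _ _ => rfl]
  set wf : (Fin (p*R) → Fin (2*m) → Bool) → Fin (2*m) → Bool → ℝ :=
    fun Bm i ε => (1/2:ℝ) * ∏ r, f (Bm r i) ε with hwf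
  set θ : Fin (2*m) → (Fin (p*R) → Bool) → ℝ :=
    fun i y => if i ∈ P then ((1/2:ℝ) * A false y + (1/2:ℝ) * A true y)
      else ((1/2:ℝ) * A false y + (1/2:ℝ) * A true y
        - (1 - Real.exp (-1)) * min ((1/2:ℝ) * A false y) ((1/2:ℝ) * A true y)) with hθ
  clear_value f A E0 TcR t' s' Mμ ρ wf θ
  have hβ2 : β^2 ≤ 1/16 := by nlinarith
  have hfnn : ∀ b ε, 0 ≤ f b ε := by
    intro b ε; simp only [hf]; split <;> linarith
  have hfsum : ∀ ε, ∑ b : Bool, f b ε = 1 := by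
    intro ε; rw [Fintype.sum_bool]; cases ε <;> simp [hf] <;> ring
  have hAnn : ∀ ε y, 0 ≤ A ε y := by
    intro ε y; simp only [hA]; exact Finset.prod_nonneg (fun r _ => hfnn _ _)
  have hAsum : ∀ ε, ∑ y : Fin (p*R) → Bool, A ε y = 1 := by
    intro ε
    simp only [hA]
    rw [sum_pi_prod' (fun (_ : Fin (p*R)) (b : Bool) => f b ε)]
    rw [Finset.prod_congr rfl (fun r _ => hfsum ε), Finset.prod_const_one]
  have hPsub : P.card ≤ 2*m := by
    simpa using Finset.card_le_card (Finset.subset_univ P)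
  have hKcast : (((univ.filter (fun i : Fin (2*m) => ¬ i ∈ P)).card : ℝ)) = TcR := by
    have hPc : univ.filter (fun i : Fin (2*m) => ¬ i ∈ P) = Pᶜ := by ext i; simp
    rw [hPc, Finset.card_compl, hTcR]
    simp only [Fintype.card_fin]
    push_cast [Nat.cast_sub hPsub]
    ring
  have hTcR0 : 0 ≤ TcR := by rw [← hKcast]; positivity
  have hE0pos : 0 < E0 := by rw [hE0]; exact Real.exp_pos _
  have hE0le1 : E0 ≤ 1 := by
    rw [hE0, Real.exp_le_one_iff, neg_nonpos]
    positivity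
  have hcard_U : (Fintype.card (Fin (p*u) → Fin (2*m) → Bool) : ℝ) * ((1:ℝ)/2)^(p*u*(2*m)) = 1 := by
    simp only [Fintype.card_fun, Fintype.card_bool, Fintype.card_fin]
    rw [← pow_mul, Nat.mul_comm (2*m) (p*u)]
    push_cast
    rw [one_div, inv_pow, mul_inv_cancel₀ (by positivity)]
  have hcard_c : (Fintype.card (Fin (2*m) → Bool) : ℝ) * ((1:ℝ)/2)^(2*m) = 1 := by
    simp only [Fintype.card_fun, Fintype.card_bool, Fintype.card_fin]
    push_cast
    rw [one_div, inv_pow, mul_inv_cancel₀ (by positivity)]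
  -- total mass one
  have hBmsum : ∀ c : Fin (2*m) → Bool,
      ∑ Bm : Fin (p*R) → Fin (2*m) → Bool,
        ∏ r : Fin (p*R), ∏ i : Fin (2*m), f (Bm r i) (c i) = 1 := by
    intro c
    rw [sum_pi_prod' (fun (_ : Fin (p*R)) (row : Fin (2*m) → Bool) => ∏ i, f (row i) (c i))]
    have hrow : (∑ row : Fin (2*m) → Bool, ∏ i, f (row i) (c i)) = 1 := by
      rw [sum_pi_prod' (fun (i : Fin (2*m)) (b : Bool) => f b (c i))]
      rw [Finset.prod_congr rfl (fun i _ => hfsum (c i)), Finset.prod_const_one]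
    rw [Finset.prod_congr rfl (fun r _ => hrow), Finset.prod_const_one]
  have htotal : ∑ c : Fin (2*m) → Bool, ∑ U : Fin (p*u) → Fin (2*m) → Bool,
      ∑ Bm : Fin (p*R) → Fin (2*m) → Bool,
        (((1/2 : ℝ)^(2*m)) * ((1/2 : ℝ)^(p*u*(2*m))) *
          ∏ r : Fin (p*R), ∏ i : Fin (2*m), f (Bm r i) (c i)) = 1 := by
    have h1 : ∀ c : Fin (2*m) → Bool, ∀ U : Fin (p*u) → Fin (2*m) → Bool,
        ∑ Bm : Fin (p*R) → Fin (2*m) → Bool,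
          (((1/2 : ℝ)^(2*m)) * ((1/2 : ℝ)^(p*u*(2*m))) *
            ∏ r : Fin (p*R), ∏ i : Fin (2*m), f (Bm r i) (c i))
          = ((1/2 : ℝ)^(2*m)) * ((1/2 : ℝ)^(p*u*(2*m))) := by
      intro c U
      rw [← Finset.mul_sum, hBmsum c, mul_one]
    calc ∑ c : Fin (2*m) → Bool, ∑ U : Fin (p*u) → Fin (2*m) → Bool,
        ∑ Bm : Fin (p*R) → Fin (2*m) → Bool,
          (((1/2 : ℝ)^(2*m)) * ((1/2 : ℝ)^(p*u*(2*m))) *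
            ∏ r : Fin (p*R), ∏ i : Fin (2*m), f (Bm r i) (c i))
        = ∑ c : Fin (2*m) → Bool, ∑ U : Fin (p*u) → Fin (2*m) → Bool,
            (((1/2 : ℝ)^(2*m)) * ((1/2 : ℝ)^(p*u*(2*m)))) := by
          refine Finset.sum_congr rfl (fun c _ => Finset.sum_congr rfl (fun U _ => h1 c U))
      _ = 1 := by
          rw [Finset.sum_const, Finset.sum_const, card_univ, card_univ, nsmul_eq_mul,
            nsmul_eq_mul]
          calc (Fintype.card (Fin (2*m) → Bool) : ℝ) *
              ((Fintype.card (Fin (p*u) → Fin (2*m) → Bool) : ℝ) *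
                (((1/2 : ℝ)^(2*m)) * ((1/2 : ℝ)^(p*u*(2*m)))))
              = ((Fintype.card (Fin (2*m) → Bool) : ℝ) * ((1:ℝ)/2)^(2*m)) *
                ((Fintype.card (Fin (p*u) → Fin (2*m) → Bool) : ℝ) * ((1:ℝ)/2)^(p*u*(2*m))) := by
                ring
            _ = 1 := by rw [hcard_c, hcard_U, mul_one]
  -- Hellinger / Cauchy-Schwarz lower bound on Mμ
  have hABconst : ∀ y : Fin (p*R) → Bool,
      A false y * A true y = ((Real.sqrt (1/4 - β^2))^(p*R))^2 := by
    intro y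
    have h14 : (0:ℝ) ≤ 1/4 - β^2 := by nlinarith
    simp only [hA]
    rw [← Finset.prod_mul_distrib]
    have : ∀ r : Fin (p*R), f (y r) false * f (y r) true = 1/4 - β^2 := by
      intro r; cases hyr : y r <;> simp [hf] <;> ring
    rw [Finset.prod_congr rfl (fun r _ => this r), Finset.prod_const]
    rw [← pow_mul, mul_comm (p*R) 2, pow_mul, Real.sq_sqrt h14]
    simp [card_univ]
  have hsqrtAB : ∀ y : Fin (p*R) → Bool,
      Real.sqrt (min (A false y) (A true y)) * Real.sqrt (max (A false y) (A true y))
        = (Real.sqrt (1/4 - β^2))^(p*R) := by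
    intro y
    rw [← Real.sqrt_mul (le_min (hAnn false y) (hAnn true y)), min_mul_max, hABconst y]
    exact Real.sqrt_sq (by positivity)
  have hCS : ((1:ℝ) - 4*β^2)^(p*R) ≤ Mμ * 2 := by
    have hcs := Finset.sum_mul_sq_le_sq_mul_sq Finset.univ
      (fun y : Fin (p*R) → Bool => Real.sqrt (min (A false y) (A true y)))
      (fun y : Fin (p*R) → Bool => Real.sqrt (max (A false y) (A true y)))
    have hFG : ∑ y : Fin (p*R) → Bool,
        Real.sqrt (min (A false y) (A true y)) * Real.sqrt (max (A false y) (A true y))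
        = (2:ℝ)^(p*R) * (Real.sqrt (1/4 - β^2))^(p*R) := by
      rw [Finset.sum_congr rfl (fun y _ => hsqrtAB y), Finset.sum_const, card_univ,
        nsmul_eq_mul]
      congr 1
      simp [Fintype.card_fun]
    have hF2 : ∑ y : Fin (p*R) → Bool, (Real.sqrt (min (A false y) (A true y)))^2 = Mμ := by
      rw [hMμ]
      refine Finset.sum_congr rfl (fun y _ => ?_)
      exact Real.sq_sqrt (le_min (hAnn false y) (hAnn true y))
    have hG2 : ∑ y : Fin (p*R) → Bool, (Real.sqrt (max (A false y) (A true y)))^2 ≤ 2 := by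
      have hptwise : ∀ y : Fin (p*R) → Bool, (Real.sqrt (max (A false y) (A true y)))^2
          ≤ A false y + A true y := by
        intro y
        rw [Real.sq_sqrt (le_max_of_le_left (hAnn false y))]
        exact max_le (le_add_of_nonneg_right (hAnn true y))
          (le_add_of_nonneg_left (hAnn false y))
      calc ∑ y : Fin (p*R) → Bool, (Real.sqrt (max (A false y) (A true y)))^2
          ≤ ∑ y : Fin (p*R) → Bool, (A false y + A true y) :=
            Finset.sum_le_sum (fun y _ => hptwise y)
        _ = 2 := by rw [Finset.sum_add_distrib, hAsum false, hAsum true]; norm_num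
    rw [hFG] at hcs
    rw [hF2] at hcs
    have h14 : (0:ℝ) ≤ 1/4 - β^2 := by nlinarith
    have hs2 : ((2:ℝ) * Real.sqrt (1/4 - β^2))^2 = 1 - 4*β^2 := by
      rw [mul_pow, Real.sq_sqrt h14]; ring
    have hpow : ((2:ℝ)^(p*R) * (Real.sqrt (1/4 - β^2))^(p*R))^2 = ((1:ℝ) - 4*β^2)^(p*R) := by
      rw [← mul_pow, pow_right_comm, hs2]
    rw [hpow] at hcs
    have hMnn : (0:ℝ) ≤ Mμ := by
      rw [hMμ]; exact Finset.sum_nonneg (fun y _ => le_min (hAnn false y) (hAnn true y))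
    exact hcs.trans (mul_le_mul_of_nonneg_left hG2 hMnn)
  have hMμ1 : Mμ ≤ 1 := by
    rw [hMμ, ← hAsum false]
    exact Finset.sum_le_sum (fun y _ => min_le_left _ _)
  have hE0le : E0 ≤ ((1:ℝ) - 4*β^2)^(p*R) := by
    have h1 : Real.exp (-(6*β^2))^(p*R) ≤ ((1:ℝ) - 4*β^2)^(p*R) :=
      pow_le_pow_left₀ (Real.exp_pos _).le (aux_factor β hβ2) (p*R)
    have h2 : E0 = Real.exp (-(6*β^2))^(p*R) := by
      rw [← Real.exp_nat_mul, hE0]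
      congr 1
      push_cast
      ring
    rw [h2]; exact h1
  have hMμE0 : E0 / 2 ≤ Mμ := by linarith [hE0le.trans hCS]
  -- nonnegativity of wf
  have hwfnn : ∀ Bm (i : Fin (2*m)) (b : Bool), 0 ≤ wf Bm i b := by
    intro Bm i b
    simp only [hwf]
    exact mul_nonneg (by norm_num) (Finset.prod_nonneg (fun r _ => hfnn _ _))
  -- per (U, Bm) conditional bound, via core_bound
  have hcore : ∀ (U : Fin (p*u) → Fin (2*m) → Bool) (Bm : Fin (p*R) → Fin (2*m) → Bool),
      ∑ c : Fin (2*m) → Bool,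
        ((((1/2:ℝ)^(2*m)) * ((1/2:ℝ)^(p*u*(2*m))) *
            ∏ r : Fin (p*R), ∏ i : Fin (2*m), f (Bm r i) (c i)) *
          ∏ i ∈ univ.filter (fun i : Fin (2*m) => ¬ i ∈ P),
            (if B (fun j => c (S j)) (U, Bm) i = c i then (1:ℝ) else Real.exp (-1)))
      ≤ ((1/2:ℝ)^(p*u*(2*m))) *
          ((∏ i ∈ univ.filter (fun i : Fin (2*m) => i ∈ P),
              (wf Bm i false + wf Bm i true)) *
            ∏ i ∈ univ.filter (fun i : Fin (2*m) => ¬ i ∈ P),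
              (wf Bm i false + wf Bm i true
                - (1 - Real.exp (-1)) * min (wf Bm i false) (wf Bm i true))) := by
    intro U Bm
    have hwrw : ∀ c : Fin (2*m) → Bool,
        ((1/2:ℝ)^(2*m)) * ∏ r : Fin (p*R), ∏ i : Fin (2*m), f (Bm r i) (c i)
          = ∏ i : Fin (2*m), wf Bm i (c i) := by
      intro c
      rw [Finset.prod_comm]
      simp only [hwf]
      rw [show ((1/2:ℝ)^(2*m)) = ∏ _i : Fin (2*m), (1/2:ℝ) by
        rw [Finset.prod_const, card_univ, Fintype.card_fin]]
      rw [← Finset.prod_mul_distrib]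
    have hGinv : ∀ c c' : Fin (2*m) → Bool, (∀ i, i ∈ P → c i = c' i) →
        ∀ i, B (fun j => c (S j)) (U, Bm) i = B (fun j => c' (S j)) (U, Bm) i := by
      intro c c' hcc i
      have : (fun j => c (S j)) = (fun j => c' (S j)) := by
        funext j
        exact hcc (S j) (by rw [hP]; exact Finset.mem_image_of_mem S (Finset.mem_univ j))
      rw [this]
    calc ∑ c : Fin (2*m) → Bool,
        ((((1/2:ℝ)^(2*m)) * ((1/2:ℝ)^(p*u*(2*m))) *
            ∏ r : Fin (p*R), ∏ i : Fin (2*m), f (Bm r i) (c i)) *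
          ∏ i ∈ univ.filter (fun i : Fin (2*m) => ¬ i ∈ P),
            (if B (fun j => c (S j)) (U, Bm) i = c i then (1:ℝ) else Real.exp (-1)))
        = ∑ c : Fin (2*m) → Bool, ((1/2:ℝ)^(p*u*(2*m))) *
            ((∏ i : Fin (2*m), wf Bm i (c i)) *
              ∏ i ∈ univ.filter (fun i : Fin (2*m) => ¬ i ∈ P),
                (if B (fun j => c (S j)) (U, Bm) i = c i then (1:ℝ) else Real.exp (-1))) := by
          refine Finset.sum_congr rfl (fun c _ => ?_)
          rw [← hwrw c]; ring
      _ = ((1/2:ℝ)^(p*u*(2*m))) * ∑ c : Fin (2*m) → Bool,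
            ((∏ i : Fin (2*m), wf Bm i (c i)) *
              ∏ i ∈ univ.filter (fun i : Fin (2*m) => ¬ i ∈ P),
                (if B (fun j => c (S j)) (U, Bm) i = c i then (1:ℝ) else Real.exp (-1))) := by
          rw [Finset.mul_sum]
      _ ≤ _ := by
          refine mul_le_mul_of_nonneg_left ?_ (by positivity)
          exact core_bound (fun i : Fin (2*m) => i ∈ P) (wf Bm) (hwfnn Bm)
            (fun c => B (fun j => c (S j)) (U, Bm)) hGinv
  -- bridging the per-coordinate bound to column functions
  have hbridge : ∀ Bm : Fin (p*R) → Fin (2*m) → Bool,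
      ((∏ i ∈ univ.filter (fun i : Fin (2*m) => i ∈ P),
          (wf Bm i false + wf Bm i true)) *
        ∏ i ∈ univ.filter (fun i : Fin (2*m) => ¬ i ∈ P),
          (wf Bm i false + wf Bm i true
            - (1 - Real.exp (-1)) * min (wf Bm i false) (wf Bm i true)))
      = ∏ i : Fin (2*m), θ i (fun r => Bm r i) := by
    intro Bm
    rw [← Finset.prod_filter_mul_prod_filter_not univ (fun i : Fin (2*m) => i ∈ P)
      (fun i => θ i (fun r => Bm r i))]
    congr 1
    · refine Finset.prod_congr rfl (fun i hi => ?_)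
      have hp := (Finset.mem_filter.mp hi).2
      simp only [hθ, hp, ite_true, hwf, hA]
    · refine Finset.prod_congr rfl (fun i hi => ?_)
      have hp := (Finset.mem_filter.mp hi).2
      simp only [hθ, hp, ite_false, hwf, hA]
  -- sum over Bm of the column products
  have hθsum : ∀ i : Fin (2*m), ∑ y : Fin (p*R) → Bool, θ i y = if i ∈ P then 1 else ρ := by
    intro i
    by_cases hiP : i ∈ P
    · simp only [hθ, hiP, ite_true]
      rw [Finset.sum_add_distrib, ← Finset.mul_sum, ← Finset.mul_sum, hAsum false, hAsum true]
      norm_num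
    · simp only [hθ, hiP, ite_false]
      have hmin : ∀ y : Fin (p*R) → Bool,
          min ((1/2:ℝ) * A false y) ((1/2:ℝ) * A true y)
            = (1/2:ℝ) * min (A false y) (A true y) :=
        fun y => (mul_min_of_nonneg _ _ (by norm_num)).symm
      rw [Finset.sum_congr rfl (fun y _ => by rw [hmin y])]
      rw [Finset.sum_sub_distrib, Finset.sum_add_distrib, ← Finset.mul_sum, ← Finset.mul_sum,
        hAsum false, hAsum true, ← Finset.mul_sum, ← Finset.mul_sum, ← hMμ, hρ]
      ring
  have hΦ : ∑ Bm : Fin (p*R) → Fin (2*m) → Bool, ∏ i : Fin (2*m), θ i (fun r => Bm r i)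
      = ρ ^ (univ.filter (fun i : Fin (2*m) => ¬ i ∈ P)).card := by
    rw [← Equiv.sum_comp (Equiv.piComm (fun (_ : Fin (p*R)) (_ : Fin (2*m)) => Bool)).symm
      (fun Bm => ∏ i : Fin (2*m), θ i (fun r => Bm r i))]
    have hsw : ∀ M : Fin (2*m) → Fin (p*R) → Bool,
        (∏ i : Fin (2*m),
          θ i (fun r => (Equiv.piComm (fun (_ : Fin (p*R)) (_ : Fin (2*m)) => Bool)).symm M r i))
        = ∏ i : Fin (2*m), θ i (M i) := by
      intro M; rfl
    rw [Finset.sum_congr rfl (fun M _ => hsw M)]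
    rw [sum_pi_prod' (fun (i : Fin (2*m)) (y : Fin (p*R) → Bool) => θ i y)]
    rw [Finset.prod_congr rfl (fun i _ => hθsum i)]
    rw [← Finset.prod_filter_mul_prod_filter_not univ (fun i : Fin (2*m) => i ∈ P)]
    rw [Finset.prod_congr rfl
      (fun i hi => if_pos ((Finset.mem_filter.mp hi).2 : i ∈ P)), Finset.prod_const_one, one_mul]
    rw [Finset.prod_congr rfl (fun i hi => if_neg ((Finset.mem_filter.mp hi).2)),
      Finset.prod_const]
  -- the conditional error sum
  set E2 : ℝ := ∑ c : Fin (2*m) → Bool, ∑ U : Fin (p*u) → Fin (2*m) → Bool,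
      ∑ Bm : Fin (p*R) → Fin (2*m) → Bool,
        ((((1/2:ℝ)^(2*m)) * ((1/2:ℝ)^(p*u*(2*m))) *
            ∏ r : Fin (p*R), ∏ i : Fin (2*m), f (Bm r i) (c i)) *
          ∏ i ∈ univ.filter (fun i : Fin (2*m) => ¬ i ∈ P),
            (if B (fun j => c (S j)) (U, Bm) i = c i then (1:ℝ) else Real.exp (-1)))
    with hE2def
  have hE2 : E2 ≤ ρ ^ (univ.filter (fun i : Fin (2*m) => ¬ i ∈ P)).card := by
    rw [hE2def]
    rw [Finset.sum_comm]
    rw [Finset.sum_congr rfl (fun (U : Fin (p*u) → Fin (2*m) → Bool) _ => Finset.sum_comm)]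
    calc ∑ U : Fin (p*u) → Fin (2*m) → Bool, ∑ Bm : Fin (p*R) → Fin (2*m) → Bool,
        ∑ c : Fin (2*m) → Bool,
          ((((1/2:ℝ)^(2*m)) * ((1/2:ℝ)^(p*u*(2*m))) *
              ∏ r : Fin (p*R), ∏ i : Fin (2*m), f (Bm r i) (c i)) *
            ∏ i ∈ univ.filter (fun i : Fin (2*m) => ¬ i ∈ P),
              (if B (fun j => c (S j)) (U, Bm) i = c i then (1:ℝ) else Real.exp (-1)))
        ≤ ∑ U : Fin (p*u) → Fin (2*m) → Bool, ∑ Bm : Fin (p*R) → Fin (2*m) → Bool,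
            ((1/2:ℝ)^(p*u*(2*m))) *
              ((∏ i ∈ univ.filter (fun i : Fin (2*m) => i ∈ P),
                  (wf Bm i false + wf Bm i true)) *
                ∏ i ∈ univ.filter (fun i : Fin (2*m) => ¬ i ∈ P),
                  (wf Bm i false + wf Bm i true
                    - (1 - Real.exp (-1)) * min (wf Bm i false) (wf Bm i true))) :=
          Finset.sum_le_sum (fun U _ => Finset.sum_le_sum (fun Bm _ => hcore U Bm))
      _ = ∑ U : Fin (p*u) → Fin (2*m) → Bool,
            ((1/2:ℝ)^(p*u*(2*m))) * (ρ ^ (univ.filter (fun i : Fin (2*m) => ¬ i ∈ P)).card) := by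
          refine Finset.sum_congr rfl (fun U _ => ?_)
          rw [← Finset.mul_sum]
          congr 1
          rw [Finset.sum_congr rfl (fun Bm _ => hbridge Bm), hΦ]
      _ = ρ ^ (univ.filter (fun i : Fin (2*m) => ¬ i ∈ P)).card := by
          rw [Finset.sum_const, card_univ, nsmul_eq_mul, ← mul_assoc, hcard_U, one_mul]
  -- final comparison
  rw [ge_iff_le]
  have hfinal := aux_final TcR E0 Mμ (univ.filter (fun i : Fin (2*m) => ¬ i ∈ P)).card
    hTcR0 hE0pos hE0le1 hMμE0 hMμ1 hKcast
  rw [← ht', ← hρ, ← hs'] at hfinal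
  have hexpE2 : Real.exp t' * E2 ≤ Real.exp (-s') :=
    le_trans (mul_le_mul_of_nonneg_left hE2 (Real.exp_pos t').le) hfinal
  have hsplit : ∑ c : Fin (2*m) → Bool, ∑ U : Fin (p*u) → Fin (2*m) → Bool,
      ∑ Bm : Fin (p*R) → Fin (2*m) → Bool,
        ((((1/2:ℝ)^(2*m)) * ((1/2:ℝ)^(p*u*(2*m))) *
            ∏ r : Fin (p*R), ∏ i : Fin (2*m), f (Bm r i) (c i))
          - Real.exp t' *
            ((((1/2:ℝ)^(2*m)) * ((1/2:ℝ)^(p*u*(2*m))) *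
                ∏ r : Fin (p*R), ∏ i : Fin (2*m), f (Bm r i) (c i)) *
              ∏ i ∈ univ.filter (fun i : Fin (2*m) => ¬ i ∈ P),
                (if B (fun j => c (S j)) (U, Bm) i = c i then (1:ℝ) else Real.exp (-1))))
      = 1 - Real.exp t' * E2 := by
    simp only [Finset.sum_sub_distrib]
    rw [htotal]
    congr 1
    rw [hE2def]
    simp only [← Finset.mul_sum]
  have hpt : ∀ (c : Fin (2*m) → Bool) (U : Fin (p*u) → Fin (2*m) → Bool)
      (Bm : Fin (p*R) → Fin (2*m) → Bool),
      ((((1/2:ℝ)^(2*m)) * ((1/2:ℝ)^(p*u*(2*m))) *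
          ∏ r : Fin (p*R), ∏ i : Fin (2*m), f (Bm r i) (c i))
        - Real.exp t' *
          ((((1/2:ℝ)^(2*m)) * ((1/2:ℝ)^(p*u*(2*m))) *
              ∏ r : Fin (p*R), ∏ i : Fin (2*m), f (Bm r i) (c i)) *
            ∏ i ∈ univ.filter (fun i : Fin (2*m) => ¬ i ∈ P),
              (if B (fun j => c (S j)) (U, Bm) i = c i then (1:ℝ) else Real.exp (-1))))
      ≤ (((1/2:ℝ)^(2*m)) * ((1/2:ℝ)^(p*u*(2*m))) *
          ∏ r : Fin (p*R), ∏ i : Fin (2*m), f (Bm r i) (c i)) *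
        (if t' ≤ ((univ.filter
              (fun i : Fin (2*m) => B (fun j => c (S j)) (U, Bm) i ≠ c i)).card : ℝ)
          then (1:ℝ) else 0) := by
    intro c U Bm
    have hWnn : 0 ≤ ((1/2:ℝ)^(2*m)) * ((1/2:ℝ)^(p*u*(2*m))) *
        ∏ r : Fin (p*R), ∏ i : Fin (2*m), f (Bm r i) (c i) := by
      refine mul_nonneg (by positivity) ?_
      exact Finset.prod_nonneg (fun r _ => Finset.prod_nonneg (fun i _ => hfnn _ _))
    have hX : ((((univ.filter (fun i : Fin (2*m) => ¬ i ∈ P)).filter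
          (fun i => ¬ (B (fun j => c (S j)) (U, Bm) i = c i))).card : ℝ))
        ≤ (((univ.filter
            (fun i : Fin (2*m) => B (fun j => c (S j)) (U, Bm) i ≠ c i)).card : ℝ)) := by
      have hsub : (univ.filter (fun i : Fin (2*m) => ¬ i ∈ P)).filter
          (fun i => ¬ (B (fun j => c (S j)) (U, Bm) i = c i))
          ⊆ univ.filter (fun i : Fin (2*m) => B (fun j => c (S j)) (U, Bm) i ≠ c i) := by
        intro i hi
        exact Finset.mem_filter.mpr ⟨Finset.mem_univ i, (Finset.mem_filter.mp hi).2⟩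
      exact_mod_cast Finset.card_le_card hsub
    have haux := aux_pointwise' (univ.filter (fun i : Fin (2*m) => ¬ i ∈ P))
      (fun i => B (fun j => c (S j)) (U, Bm) i = c i) t'
      ((univ.filter (fun i : Fin (2*m) => B (fun j => c (S j)) (U, Bm) i ≠ c i)).card) hX
    calc ((((1/2:ℝ)^(2*m)) * ((1/2:ℝ)^(p*u*(2*m))) *
          ∏ r : Fin (p*R), ∏ i : Fin (2*m), f (Bm r i) (c i))
        - Real.exp t' *
          ((((1/2:ℝ)^(2*m)) * ((1/2:ℝ)^(p*u*(2*m))) *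
              ∏ r : Fin (p*R), ∏ i : Fin (2*m), f (Bm r i) (c i)) *
            ∏ i ∈ univ.filter (fun i : Fin (2*m) => ¬ i ∈ P),
              (if B (fun j => c (S j)) (U, Bm) i = c i then (1:ℝ) else Real.exp (-1))))
        = (((1/2:ℝ)^(2*m)) * ((1/2:ℝ)^(p*u*(2*m))) *
            ∏ r : Fin (p*R), ∏ i : Fin (2*m), f (Bm r i) (c i)) *
          (1 - Real.exp t' *
            ∏ i ∈ univ.filter (fun i : Fin (2*m) => ¬ i ∈ P),
              (if B (fun j => c (S j)) (U, Bm) i = c i then (1:ℝ) else Real.exp (-1))) := by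
          ring
      _ ≤ _ := mul_le_mul_of_nonneg_left haux hWnn
  calc 1 - Real.exp (-s') ≤ 1 - Real.exp t' * E2 := by linarith [hexpE2]
    _ = _ := hsplit.symm
    _ ≤ _ := Finset.sum_le_sum (fun c _ => Finset.sum_le_sum (fun U _ =>
        Finset.sum_le_sum (fun Bm _ => hpt c U Bm)))
end
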